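/- arXiv:1106.0617 — 4 statements merged into one kernel-verified Lean document; each statement's English description precedes it below -/
import Mathlib

section
/- Assume 1 < α_min < 2, −1 < 2 − α_min − α_sess < 1 and α_sess > 1. Then V(t) ~ σ² t^{4−α_min−α_sess} L_V(t) L_r(t) as t → ∞, where σ² = σ_lim²(3−α_min)(2−α_min) / ((α_sess−1)(3−α_min−α_sess)(4−α_min−α_sess)). -/
open MeasureTheory Filter Set

/-- A measurable, positive function `L` on `(0,∞)` is slowly varying at infinity if for
every `c > 0`, `L(cx)/L(x) → 1` as `x → ∞`. -/
def SlowlyVarying (L : ℝ → ℝ) : Prop :=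
  Measurable L ∧ (∀ x > 0, 0 < L x) ∧
    ∀ c > 0, Tendsto (fun x => L (c * x) / L x) atTop (nhds 1)

/-!
Karamata's theorem: if `f x ~ A x ^ ρ ℓ x` with `ℓ` slowly varying, then
`∫₀ᵗ f ~ A t ^ (ρ + 1) ℓ t / (ρ + 1)` for `ρ > -1`, and `∫ₜ^∞ f ~ -A t ^ (ρ + 1) ℓ t / (ρ + 1)`
for `ρ < -1`. After the substitution `x = t s` both are dominated convergence, the domination
coming from Potter's bound `ℓ y / ℓ x ≤ e^δ max (y / x) (x / y) ^ δ` for large `x, y`, itself a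
consequence of the uniform convergence theorem for `log ∘ ℓ ∘ exp`. Applied to the tail `H̄`,
Karamata's theorem gives `H̄_I x ~ x ^ (1 - α_sess) L_V x / (α_sess - 1)`, so `r H̄_I` is regularly
varying of index `ρ = 2 - α_min - α_sess > -1`, and the two integrations in `V` contribute the
factors `1 / (ρ + 1)` and `1 / (ρ + 2)`.
-/

open Real

section UniformConvergence

variable {h : ℝ → ℝ}

theorem tendsto_volume_setOf_le_abs_sub (hmeas : Measurable h)
    (hlim : ∀ u, Tendsto (fun t => h (u + t) - h t) atTop (nhds 0)) {ε : ℝ} (hε : 0 < ε) :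
    Tendsto (fun t => volume {w ∈ Icc (0:ℝ) 2 | ε ≤ |h (w + t) - h t|}) atTop (nhds 0) := by
  have hmeas_set : ∀ t, MeasurableSet {w ∈ Icc (0:ℝ) 2 | ε ≤ |h (w + t) - h t|} := fun t =>
    measurableSet_Icc.inter <| measurableSet_le measurable_const
      ((hmeas.comp (measurable_id.add_const t)).sub measurable_const).abs
  simpa using tendsto_measure_of_tendsto_indicator atTop (A := ∅) hmeas_set measurableSet_Icc
    (by simp [Real.volume_Icc]) (Eventually.of_forall fun t => sep_subset _ _) fun w => by
      filter_upwards [(hlim w).abs.eventually_lt_const (by simpa using hε)] with t ht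
      simp [ht.not_ge]

/-- The additive uniform convergence theorem, on `[0, 1]`: the two sets of `w ∈ [0, 2]` where
`h (w + t)` is far from `h t`, respectively from `h (u + t)`, are too small to cover `[u, u + 1]`. -/
theorem eventually_forall_abs_sub_lt (hmeas : Measurable h)
    (hlim : ∀ u, Tendsto (fun t => h (u + t) - h t) atTop (nhds 0)) {ε : ℝ} (hε : 0 < ε) :
    ∀ᶠ t in atTop, ∀ u ∈ Icc (0:ℝ) 1, |h (u + t) - h t| < ε := by
  set E : ℝ → Set ℝ := fun t => {w ∈ Icc (0:ℝ) 2 | ε / 2 ≤ |h (w + t) - h t|}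
  obtain ⟨T, hT⟩ := eventually_atTop.1 <|
    (tendsto_volume_setOf_le_abs_sub hmeas hlim (half_pos hε)).eventually_lt_const
      (show (0 : ENNReal) < ENNReal.ofReal (1 / 2) by simp)
  filter_upwards [eventually_ge_atTop (max T 0)] with t ht u ⟨hu0, hu1⟩
  by_contra! hge
  have hcover : Icc u (u + 1) ⊆ E t ∪ (· + -u) ⁻¹' E (u + t) := by
    intro w ⟨hw0, hw1⟩
    by_contra hw
    simp only [E, mem_union, mem_preimage, mem_ofPred_eq, mem_Icc, not_or, not_and, not_le] at hw
    have h1 := hw.1 ⟨by linarith, by linarith⟩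
    have h2 := hw.2 ⟨by linarith, by linarith⟩
    rw [show w + -u + (u + t) = w + t by ring] at h2
    have := abs_sub_le (h (u + t)) (h (w + t)) (h t)
    rw [abs_sub_comm (h (u + t)) (h (w + t))] at this
    linarith
  have hvol := (measure_mono (μ := volume) hcover).trans (measure_union_le _ _)
  rw [Real.volume_Icc, measure_preimage_add_right, add_sub_cancel_left] at hvol
  have hsum := hvol.trans_lt (ENNReal.add_lt_add (hT t (le_of_max_le_left ht))
    (hT (u + t) (by linarith [le_of_max_le_left ht])))
  rw [← ENNReal.ofReal_add (by norm_num) (by norm_num)] at hsum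
  norm_num at hsum

theorem exists_forall_abs_sub_le_mul (hmeas : Measurable h)
    (hlim : ∀ u, Tendsto (fun t => h (u + t) - h t) atTop (nhds 0)) {ε : ℝ} (hε : 0 < ε) :
    ∃ T, ∀ a b, T ≤ a → a ≤ b → |h b - h a| ≤ ε * (b - a + 1) := by
  obtain ⟨T, hT⟩ := eventually_atTop.1 (eventually_forall_abs_sub_lt hmeas hlim hε)
  have hstep : ∀ n : ℕ, ∀ a ≥ T, ∀ u ∈ Icc (0:ℝ) 1, |h (u + n + a) - h a| ≤ ε * (n + 1) := by
    intro n
    induction n with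
    | zero => intro a ha u hu; simpa using (hT a ha u hu).le
    | succ n ih =>
      intro a ha u hu
      have h1 := ih (a + 1) (by linarith) u hu
      have h2 := (hT a ha 1 ⟨zero_le_one, le_rfl⟩).le
      rw [show u + ↑(n + 1) + a = u + n + (a + 1) by push_cast; ring] at *
      calc |h (u + n + (a + 1)) - h a|
          ≤ |h (u + n + (a + 1)) - h (a + 1)| + |h (1 + a) - h a| := by
            rw [add_comm 1 a]; exact abs_sub_le _ _ _
        _ ≤ ε * (↑(n + 1) + 1) := by push_cast; linarith
  refine ⟨T, fun a b ha hab => ?_⟩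
  set n := ⌊b - a⌋₊
  have hn : (n : ℝ) ≤ b - a := Nat.floor_le (by linarith)
  have := hstep n a ha (b - a - n) ⟨by linarith, by linarith [Nat.lt_floor_add_one (b - a)]⟩
  rw [show b - a - n + n + a = b by ring] at this
  exact this.trans (by gcongr)

end UniformConvergence

namespace SlowlyVarying

variable {L : ℝ → ℝ}

/-- Potter's bound, in logarithmic form: it is the chaining bound for `log ∘ L ∘ exp`. -/
theorem abs_log_sub_le (hL : SlowlyVarying L) {δ : ℝ} (hδ : 0 < δ) :
    ∃ X > 0, ∀ x ≥ X, ∀ y ≥ X, |log (L y) - log (L x)| ≤ δ * (|log y - log x| + 1) := by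
  obtain ⟨hLmeas, hLpos, hLslow⟩ := hL
  have hlim : ∀ u, Tendsto (fun s => log (L (exp (u + s))) - log (L (exp s))) atTop (nhds 0) := by
    intro u
    have := ((continuousAt_log one_ne_zero).tendsto.comp
      ((hLslow _ (exp_pos u)).comp tendsto_exp_atTop))
    rw [log_one] at this
    refine this.congr fun s => ?_
    simp only [Function.comp, exp_add]
    exact log_div (hLpos _ (by positivity)).ne' (hLpos _ (exp_pos s)).ne'
  obtain ⟨T, hT⟩ := exists_forall_abs_sub_le_mul
    ((measurable_log.comp hLmeas).comp measurable_exp) hlim hδ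
  have hordered : ∀ x y, exp T ≤ x → x ≤ y →
      |log (L y) - log (L x)| ≤ δ * (|log y - log x| + 1) := by
    intro x y hx hxy
    have hx0 : 0 < x := (exp_pos T).trans_le hx
    have hlog : log x ≤ log y := log_le_log hx0 hxy
    have := hT (log x) (log y) ((le_log_iff_exp_le hx0).2 hx) hlog
    simp only [Function.comp_apply, exp_log hx0, exp_log (hx0.trans_le hxy)] at this
    rwa [abs_of_nonneg (sub_nonneg.2 hlog)]
  refine ⟨exp T, exp_pos T, fun x hx y hy => ?_⟩
  rcases le_total x y with hxy | hyx
  · exact hordered x y hx hxy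
  · rw [abs_sub_comm, abs_sub_comm (log y)]
    exact hordered y x hy hyx

theorem tendsto_rpow_mul_atTop (hL : SlowlyVarying L) {p : ℝ} (hp : 0 < p) :
    Tendsto (fun t => t ^ p * L t) atTop atTop := by
  obtain ⟨X, hX, hpotter⟩ := hL.abs_log_sub_le (half_pos hp)
  have hlin : Tendsto (fun t => p / 2 * log t + (log (L X) + p / 2 * (log X - 1))) atTop atTop :=
    tendsto_atTop_add_const_right _ _ (tendsto_log_atTop.const_mul_atTop (half_pos hp))
  refine tendsto_atTop_mono' _ ?_ (tendsto_exp_atTop.comp hlin)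
  filter_upwards [eventually_ge_atTop X] with t ht
  have ht0 : 0 < t := hX.trans_le ht
  have hbound := hpotter X le_rfl t ht
  rw [abs_of_nonneg (sub_nonneg.2 (log_le_log hX ht))] at hbound
  calc exp (p / 2 * log t + (log (L X) + p / 2 * (log X - 1)))
      ≤ exp (log t * p + log (L t)) :=
        exp_le_exp.2 (by linarith [neg_abs_le (log (L t) - log (L X))])
    _ = t ^ p * L t := by rw [exp_add, exp_log (hL.2.1 t ht0), rpow_def_of_pos ht0]

theorem mul {L' : ℝ → ℝ} (hL : SlowlyVarying L) (hL' : SlowlyVarying L') :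
    SlowlyVarying (fun x => L x * L' x) := by
  refine ⟨hL.1.mul hL'.1, fun x hx => mul_pos (hL.2.1 x hx) (hL'.2.1 x hx), fun c hc => ?_⟩
  have hprod := (hL.2.2 c hc).mul (hL'.2.2 c hc)
  rw [mul_one] at hprod
  exact hprod.congr fun x => (mul_div_mul_comm _ _ _ _).symm

theorem tendsto_div_rpow_mul_of_eq {ℓ f : ℝ → ℝ} {c ρ : ℝ} (hℓ : SlowlyVarying ℓ)
    (hf : ∀ x > 0, f x = c * x ^ ρ * ℓ x) :
    Tendsto (fun x => f x / (x ^ ρ * ℓ x)) atTop (nhds c) := by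
  refine tendsto_const_nhds.congr' ?_
  filter_upwards [eventually_gt_atTop 0] with x hx
  rw [hf x hx, mul_assoc, mul_div_cancel_right₀ _ (mul_pos (rpow_pos_of_pos hx ρ) (hℓ.2.1 x hx)).ne']

end SlowlyVarying

theorem Filter.Tendsto.mul_div_rpow_mul {f g ℓ ℓ' : ℝ → ℝ} {a b A B : ℝ}
    (hf : Tendsto (fun x => f x / (x ^ a * ℓ x)) atTop (nhds A))
    (hg : Tendsto (fun x => g x / (x ^ b * ℓ' x)) atTop (nhds B)) :
    Tendsto (fun x => f x * g x / (x ^ (a + b) * (ℓ x * ℓ' x))) atTop (nhds (A * B)) := by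
  refine (hf.mul hg).congr' ?_
  filter_upwards [eventually_gt_atTop 0] with x hx
  rw [div_mul_div_comm, rpow_add hx, mul_mul_mul_comm]

theorem rpow_mul_exp_abs_log_le (ρ δ : ℝ) {s : ℝ} (hs : 0 < s) :
    s ^ ρ * exp (δ * |log s|) ≤ s ^ (ρ + δ) + s ^ (ρ - δ) := by
  have hplus : s ^ (ρ + δ) = s ^ ρ * exp (δ * log s) := by
    rw [rpow_add hs, rpow_def_of_pos hs δ, mul_comm δ]
  have hminus : s ^ (ρ - δ) = s ^ ρ * exp (δ * -log s) := by
    rw [rpow_sub hs, rpow_def_of_pos hs δ, mul_neg, exp_neg, div_eq_mul_inv, mul_comm δ]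
  rcases abs_choice (log s) with habs | habs <;> rw [habs]
  · rw [← hplus]; linarith [rpow_nonneg hs.le (ρ - δ)]
  · rw [← hminus]; linarith [rpow_nonneg hs.le (ρ + δ)]

section Karamata

variable {ℓ f : ℝ → ℝ} {ρ A : ℝ}

theorem abs_comp_mul_div_le {δ B X t s : ℝ} (hX : 0 < X) (hℓpos : ∀ x > 0, 0 < ℓ x)
    (hpotter : ∀ x ≥ X, ∀ y ≥ X, |log (ℓ y) - log (ℓ x)| ≤ δ * (|log y - log x| + 1))
    (hbound : ∀ x ≥ X, |f x| ≤ B * (x ^ ρ * ℓ x)) (ht : X ≤ t) (hts : X ≤ t * s) :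
    |f (t * s) / (t ^ ρ * ℓ t)| ≤ B * exp δ * (s ^ (ρ + δ) + s ^ (ρ - δ)) := by
  have ht0 : 0 < t := hX.trans_le ht
  have hs0 : 0 < s := pos_of_mul_pos_right (hX.trans_le hts) ht0.le
  have hℓt := hℓpos t ht0
  have hℓts := hℓpos (t * s) (mul_pos ht0 hs0)
  have hden : 0 < t ^ ρ * ℓ t := mul_pos (rpow_pos_of_pos ht0 ρ) hℓt
  have hB : 0 ≤ B := nonneg_of_mul_nonneg_left ((abs_nonneg _).trans (hbound X le_rfl))
    (by have := hℓpos X hX; positivity)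
  have hratio : ℓ (t * s) / ℓ t ≤ exp (δ * (|log s| + 1)) := by
    have := hpotter t ht (t * s) hts
    rw [log_mul ht0.ne' hs0.ne', add_sub_cancel_left] at this
    calc ℓ (t * s) / ℓ t = exp (log (ℓ (t * s)) - log (ℓ t)) := by
          rw [exp_sub, exp_log hℓts, exp_log hℓt]
      _ ≤ exp (δ * (|log s| + 1)) := exp_le_exp.2 ((le_abs_self _).trans this)
  calc |f (t * s) / (t ^ ρ * ℓ t)| = |f (t * s)| / (t ^ ρ * ℓ t) := by
        rw [abs_div, abs_of_pos hden]
    _ ≤ B * ((t * s) ^ ρ * ℓ (t * s)) / (t ^ ρ * ℓ t) := by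
        gcongr; exact hbound _ hts
    _ = B * s ^ ρ * (ℓ (t * s) / ℓ t) := by
        rw [mul_rpow ht0.le hs0.le]; field_simp
    _ ≤ B * s ^ ρ * exp (δ * (|log s| + 1)) := by gcongr
    _ = B * exp δ * (s ^ ρ * exp (δ * |log s|)) := by
        rw [mul_add, mul_one, exp_add]; ring
    _ ≤ B * exp δ * (s ^ (ρ + δ) + s ^ (ρ - δ)) := by
        gcongr; exact rpow_mul_exp_abs_log_le ρ δ hs0

theorem tendsto_comp_mul_div (hℓ : SlowlyVarying ℓ)
    (hf : Tendsto (fun x => f x / (x ^ ρ * ℓ x)) atTop (nhds A)) {s : ℝ} (hs : 0 < s) :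
    Tendsto (fun t => f (t * s) / (t ^ ρ * ℓ t)) atTop (nhds (A * s ^ ρ)) := by
  have hlim := ((hf.comp (tendsto_id.atTop_mul_const hs)).mul (hℓ.2.2 s hs)).mul_const (s ^ ρ)
  rw [mul_one] at hlim
  refine hlim.congr' ?_
  filter_upwards [eventually_gt_atTop 0] with t ht
  have := hℓ.2.1 t ht
  have := hℓ.2.1 (t * s) (mul_pos ht hs)
  have := rpow_pos_of_pos ht ρ
  have := rpow_pos_of_pos hs ρ
  simp only [Function.comp_apply, id, mul_rpow ht.le hs.le, mul_comm s t]
  field_simp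

/-- The cutoff `Ioi X` keeps the integrand where Potter's bound and the asymptotics of `f` hold. -/
theorem eventually_tendsto_setIntegral_indicator_comp_mul (hℓ : SlowlyVarying ℓ)
    (hf_meas : AEStronglyMeasurable f (volume.restrict (Ioi 0)))
    (hf : Tendsto (fun x => f x / (x ^ ρ * ℓ x)) atTop (nhds A))
    {S : Set ℝ} (hS : MeasurableSet S) (hS0 : S ⊆ Ioi 0) {δ : ℝ} (hδ : 0 < δ)
    (hint : IntegrableOn (fun s => s ^ (ρ + δ) + s ^ (ρ - δ)) S) :
    ∀ᶠ X in atTop, Tendsto (fun t => ∫ s in S, (Ioi X).indicator f (t * s) / (t ^ ρ * ℓ t))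
      atTop (nhds (A * ∫ s in S, s ^ ρ)) := by
  obtain ⟨X₀, hX₀, hpotter⟩ := hℓ.abs_log_sub_le hδ
  obtain ⟨X₁, hX₁⟩ := eventually_atTop.1 <| (hf.abs.eventually_lt_const (lt_add_one |A|)).and
    (eventually_gt_atTop 0)
  have hbound : ∀ x ≥ X₁, |f x| ≤ (|A| + 1) * (x ^ ρ * ℓ x) := fun x hx => by
    obtain ⟨hlt, hx0⟩ := hX₁ x hx
    have hden : 0 < x ^ ρ * ℓ x := mul_pos (rpow_pos_of_pos hx0 ρ) (hℓ.2.1 x hx0)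
    rw [abs_div, abs_of_pos hden, div_lt_iff₀ hden] at hlt
    exact hlt.le
  filter_upwards [eventually_ge_atTop (max X₀ X₁)] with X hX
  have hX₀X := le_of_max_le_left hX
  have hX0 : 0 < X := hX₀.trans_le hX₀X
  have hpotterX : ∀ x ≥ X, ∀ y ≥ X, |log (ℓ y) - log (ℓ x)| ≤ δ * (|log y - log x| + 1) :=
    fun x hx y hy => hpotter x (hX₀X.trans hx) y (hX₀X.trans hy)
  have hboundX : ∀ x ≥ X, |f x| ≤ (|A| + 1) * (x ^ ρ * ℓ x) :=
    fun x hx => hbound x ((le_of_max_le_right hX).trans hx)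
  have hind_meas : AEStronglyMeasurable ((Ioi X).indicator f) volume :=
    (aestronglyMeasurable_indicator_iff measurableSet_Ioi).2
      (hf_meas.mono_measure (Measure.restrict_mono (Ioi_subset_Ioi hX0.le) le_rfl))
  rw [← integral_const_mul]
  refine tendsto_integral_filter_of_dominated_convergence
    (fun s => (|A| + 1) * exp δ * (s ^ (ρ + δ) + s ^ (ρ - δ))) ?_ ?_ (hint.const_mul _) ?_
  · filter_upwards [eventually_gt_atTop 0] with t ht
    simp_rw [div_eq_mul_inv]
    exact ((hind_meas.comp_quasiMeasurePreserving
      (Measure.quasiMeasurePreserving_smul volume ht.ne')).mul_const _).restrict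
  · filter_upwards [eventually_ge_atTop X] with t ht
    refine ae_restrict_of_forall_mem hS fun s hs => ?_
    rw [Real.norm_eq_abs]
    by_cases hts : t * s ∈ Ioi X
    · rw [indicator_of_mem hts]
      exact abs_comp_mul_div_le hX0 hℓ.2.1 hpotterX hboundX ht (le_of_lt hts)
    · have hs0 : 0 < s := hS0 hs
      rw [indicator_of_notMem hts, zero_div, abs_zero]
      positivity
  · refine ae_restrict_of_forall_mem hS fun s hs => ?_
    have hs0 : 0 < s := hS0 hs
    refine (tendsto_comp_mul_div hℓ hf hs0).congr' ?_
    filter_upwards [eventually_gt_atTop (X / s)] with t ht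
    rw [indicator_of_mem (show t * s ∈ Ioi X from (div_lt_iff₀ hs0).1 ht)]

theorem setIntegral_Ioc_indicator_comp_mul {X t : ℝ} (hX : 0 < X) (ht : X ≤ t) :
    ∫ s in Ioc (0:ℝ) 1, (Ioi X).indicator f (t * s) = t⁻¹ * ∫ x in X..t, f x := by
  have ht0 : 0 < t := hX.trans_le ht
  rw [← intervalIntegral.integral_of_le zero_le_one,
    intervalIntegral.integral_comp_mul_left _ ht0.ne', mul_zero, mul_one, smul_eq_mul,
    intervalIntegral.integral_of_le ht0.le, integral_indicator measurableSet_Ioi,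
    Measure.restrict_restrict measurableSet_Ioi, intervalIntegral.integral_of_le ht]
  congr 3
  ext x
  simp only [mem_inter_iff, mem_Ioi, mem_Ioc]
  constructor
  · rintro ⟨hXx, -, hxt⟩; exact ⟨hXx, hxt⟩
  · rintro ⟨hXx, hxt⟩; exact ⟨hXx, hX.trans hXx, hxt⟩

/-- Karamata's theorem. -/
theorem tendsto_intervalIntegral_div_rpow_mul (hℓ : SlowlyVarying ℓ) (hρ : -1 < ρ)
    (hf_int : ∀ t > 0, IntervalIntegrable f volume 0 t)
    (hf : Tendsto (fun x => f x / (x ^ ρ * ℓ x)) atTop (nhds A)) :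
    Tendsto (fun t => (∫ x in (0:ℝ)..t, f x) / (t ^ (ρ + 1) * ℓ t)) atTop
      (nhds (A / (ρ + 1))) := by
  have hf_meas : AEStronglyMeasurable f (volume.restrict (Ioi 0)) := by
    rw [← iUnion_Ioc_eq_Ioi_self_iff.2 fun x _ => (exists_nat_ge x).imp fun n hn =>
      hn.trans (le_add_of_nonneg_right zero_le_one), aestronglyMeasurable_iUnion_iff]
    exact fun n => (hf_int ((n : ℝ) + 1) (by positivity)).1.aestronglyMeasurable
  have hδ : 0 < (ρ + 1) / 2 := by linarith
  have hint : IntegrableOn (fun s : ℝ => s ^ (ρ + (ρ + 1) / 2) + s ^ (ρ - (ρ + 1) / 2)) (Ioc 0 1) :=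
    (intervalIntegrable_iff_integrableOn_Ioc_of_le zero_le_one).1 <|
      (intervalIntegral.intervalIntegrable_rpow' (by linarith)).add
        (intervalIntegral.intervalIntegrable_rpow' (by linarith))
  obtain ⟨X, hlim, hX⟩ := ((eventually_tendsto_setIntegral_indicator_comp_mul hℓ hf_meas hf
    measurableSet_Ioc Ioc_subset_Ioi_self hδ hint).and (eventually_gt_atTop 0)).exists
  have hpow : ∫ s in Ioc (0:ℝ) 1, s ^ ρ = 1 / (ρ + 1) := by
    rw [← intervalIntegral.integral_of_le zero_le_one, integral_rpow (Or.inl hρ), one_rpow,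
      zero_rpow (by linarith : ρ + 1 ≠ 0), sub_zero]
  rw [hpow, mul_one_div] at hlim
  have hhead : Tendsto (fun t => (∫ x in (0:ℝ)..X, f x) / (t ^ (ρ + 1) * ℓ t)) atTop (nhds 0) :=
    tendsto_const_nhds.div_atTop (hℓ.tendsto_rpow_mul_atTop (by linarith))
  refine (zero_add (A / (ρ + 1)) ▸ hhead.add hlim).congr' ?_
  filter_upwards [eventually_ge_atTop X] with t ht
  have ht0 : 0 < t := hX.trans_le ht
  have hden : t ^ (ρ + 1) * ℓ t = t * (t ^ ρ * ℓ t) := by rw [rpow_add_one ht0.ne']; ring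
  rw [integral_div, setIntegral_Ioc_indicator_comp_mul hX ht, hden, inv_mul_eq_div,
    div_div, ← add_div, intervalIntegral.integral_add_adjacent_intervals (hf_int X hX)
      ((hf_int t ht0).mono_set (by rw [uIcc_of_le ht, uIcc_of_le ht0.le]; gcongr))]

/-- Karamata's theorem for tails. -/
theorem tendsto_integral_Ioi_div_rpow_mul (hℓ : SlowlyVarying ℓ) (hρ : ρ < -1)
    (hf_meas : AEStronglyMeasurable f (volume.restrict (Ioi 0)))
    (hf : Tendsto (fun x => f x / (x ^ ρ * ℓ x)) atTop (nhds A)) :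
    Tendsto (fun x => (∫ z in Ioi x, f z) / (x ^ (ρ + 1) * ℓ x)) atTop
      (nhds (-A / (ρ + 1))) := by
  have hδ : 0 < -(ρ + 1) / 2 := by linarith
  have hint : IntegrableOn (fun s : ℝ => s ^ (ρ + -(ρ + 1) / 2) + s ^ (ρ - -(ρ + 1) / 2)) (Ioi 1) :=
    (integrableOn_Ioi_rpow_of_lt (by linarith) one_pos).add
      (integrableOn_Ioi_rpow_of_lt (by linarith) one_pos)
  obtain ⟨X, hlim, hX⟩ := ((eventually_tendsto_setIntegral_indicator_comp_mul hℓ hf_meas hf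
    measurableSet_Ioi (Ioi_subset_Ioi zero_le_one) hδ hint).and (eventually_gt_atTop 0)).exists
  rw [integral_Ioi_rpow_of_lt hρ one_pos, one_rpow, mul_div_assoc', mul_neg_one] at hlim
  refine hlim.congr' ?_
  filter_upwards [eventually_ge_atTop X] with x hx
  have hx0 : 0 < x := hX.trans_le hx
  have hcut : ∀ s ∈ Ioi (1:ℝ), (Ioi X).indicator f (x * s) / (x ^ ρ * ℓ x)
      = f (x * s) / (x ^ ρ * ℓ x) := fun s hs => by
    rw [indicator_of_mem (show x * s ∈ Ioi X from hx.trans_lt (lt_mul_of_one_lt_right hx0 hs))]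
  rw [setIntegral_congr_fun measurableSet_Ioi hcut, integral_div,
    integral_comp_mul_left_Ioi f 1 hx0, mul_one, smul_eq_mul, rpow_add_one hx0.ne']
  field_simp

theorem tendsto_iteratedIntegral_div_rpow_mul (hℓ : SlowlyVarying ℓ) (hρ : -1 < ρ)
    (hf_int : ∀ t > 0, IntervalIntegrable f volume 0 t)
    (hf : Tendsto (fun x => f x / (x ^ ρ * ℓ x)) atTop (nhds A)) :
    Tendsto (fun t => (∫ y in (0:ℝ)..t, ∫ x in (0:ℝ)..y, f x) / (t ^ (ρ + 2) * ℓ t)) atTop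
      (nhds (A / ((ρ + 1) * (ρ + 2)))) := by
  have hF_int : ∀ t > 0, IntervalIntegrable (fun y => ∫ x in (0:ℝ)..y, f x) volume 0 t :=
    fun t ht => (intervalIntegral.continuousOn_primitive_interval' (hf_int t ht)
      left_mem_uIcc).intervalIntegrable
  have := tendsto_intervalIntegral_div_rpow_mul hℓ (by linarith) hF_int
    (tendsto_intervalIntegral_div_rpow_mul hℓ hρ hf_int hf)
  rw [div_div, add_assoc, one_add_one_eq_two] at this
  exact this

end Karamata

theorem tendsto_integral_Ioi_div_of_eq_rpow_neg_mul {L H : ℝ → ℝ} {α : ℝ}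
    (hL : SlowlyVarying L) (hα : 1 < α) (hH_meas : AEStronglyMeasurable H (volume.restrict (Ioi 0)))
    (hH : ∀ x > 0, H x = x ^ (-α) * L x) :
    Tendsto (fun x => (∫ z in Ioi x, H z) / (x ^ (1 - α) * L x)) atTop (nhds (1 / (α - 1))) := by
  have := tendsto_integral_Ioi_div_rpow_mul hL (by linarith : -α < -1) hH_meas
    (hL.tendsto_div_rpow_mul_of_eq fun x hx => by rw [hH x hx, one_mul])
  rwa [show -1 / (-α + 1) = 1 / (α - 1) by
    rw [neg_add_eq_sub, ← neg_sub α 1, div_neg, neg_div, neg_neg], neg_add_eq_sub] at this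

theorem intervalIntegrable_mul_integral_Ioi {r H : ℝ → ℝ} (hr : ContinuousOn r (Ici 0))
    (hH_int : IntegrableOn H (Ioi 0)) (hH_nn : ∀ x > 0, 0 ≤ H x) {t : ℝ} (ht : 0 ≤ t) :
    IntervalIntegrable (fun x => r x * ∫ z in Ioi x, H z) volume 0 t := by
  have hanti : AntitoneOn (fun x => ∫ z in Ioi x, H z) (uIcc 0 t) := by
    rw [uIcc_of_le ht]
    intro a ha b _ hab
    exact setIntegral_mono_set (hH_int.mono_set (Ioi_subset_Ioi ha.1))
      (ae_restrict_of_forall_mem measurableSet_Ioi fun x hx => hH_nn x (ha.1.trans_lt hx))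
      (LE.le.eventuallyLE (Ioi_subset_Ioi hab))
  exact hanti.intervalIntegrable.continuousOn_mul
    (hr.mono (by rw [uIcc_of_le ht]; exact Icc_subset_Ici_self))

theorem variance_asymptotics_case3_general
    (αmin αsess μmax μW : ℝ)
    (hαmin : 1 < αmin ∧ αmin < 2)
    (hcase : -1 < 2 - αmin - αsess ∧ 2 - αmin - αsess < 1)
    (hαsess : 1 < αsess)
    (hμmax : 0 < μmax) (hμW : 0 < μW)
    (σlim2 : ℝ)
    (hσlim2 : σlim2 = 2 * μmax ^ 2 / (μW ^ 3 * (αmin - 1) * (3 - αmin) * (2 - αmin)))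
    (L_r L_V : ℝ → ℝ) (hLr : SlowlyVarying L_r) (hLV : SlowlyVarying L_V)
    -- the autocovariance `r` of the stationary on-off process
    (r : ℝ → ℝ) (hr_cont : ContinuousOn r (Set.Ici 0))
    (hr : ∀ u > (0:ℝ), r u = σlim2 / 2 * (3 - αmin) * (2 - αmin) * u ^ (1 - αmin) * L_r u)
    -- the survival function `H̄` of the lifetime distribution, with finite mean
    (Hbar : ℝ → ℝ)
    (hHbar : ∀ x > (0:ℝ), Hbar x = x ^ (-αsess) * L_V x)
    (hHbar_int : IntegrableOn Hbar (Set.Ioi 0))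
    -- the integrated tail `H̄_I`
    (HbarI : ℝ → ℝ) (hHbarI : ∀ x, HbarI x = ∫ z in Set.Ioi x, Hbar z)
    -- the variance of the integrated process
    (V : ℝ → ℝ)
    (hV : ∀ t, V t = 2 * ∫ y in (0:ℝ)..t, ∫ x in (0:ℝ)..y, r x * HbarI x)
    (σ2 : ℝ)
    (hσ2 : σ2 = σlim2 * (3 - αmin) * (2 - αmin)
      / ((αsess - 1) * (3 - αmin - αsess) * (4 - αmin - αsess))) :
    Tendsto (fun t => V t / (σ2 * t ^ (4 - αmin - αsess) * L_V t * L_r t))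
      atTop (nhds 1) := by
  obtain rfl : HbarI = fun x => ∫ z in Ioi x, Hbar z := funext hHbarI
  obtain rfl : V = fun t => 2 * ∫ y in (0:ℝ)..t, ∫ x in (0:ℝ)..y, r x * ∫ z in Ioi x, Hbar z :=
    funext hV
  have hH_nn : ∀ x > 0, 0 ≤ Hbar x := fun x hx => by
    rw [hHbar x hx]; exact mul_nonneg (rpow_nonneg hx.le _) (hLV.2.1 x hx).le
  have hf := (hLr.tendsto_div_rpow_mul_of_eq hr).mul_div_rpow_mul
    (tendsto_integral_Ioi_div_of_eq_rpow_neg_mul hLV hαsess hHbar_int.aestronglyMeasurable hHbar)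
  have hlim := ((tendsto_iteratedIntegral_div_rpow_mul (hLr.mul hLV) (by linarith [hcase.1])
    (fun t ht => intervalIntegrable_mul_integral_Ioi hr_cont hHbar_int hH_nn ht.le) hf).const_mul
      2).div_const σ2
  rw [show 1 - αmin + (1 - αsess) + 1 = 3 - αmin - αsess by ring,
    show 1 - αmin + (1 - αsess) + 2 = 4 - αmin - αsess by ring] at hlim
  obtain ⟨_, _, _, _, _, _⟩ : 0 < αmin - 1 ∧ 0 < 2 - αmin ∧ 0 < 3 - αmin ∧ 0 < αsess - 1 ∧
      0 < 3 - αmin - αsess ∧ 0 < 4 - αmin - αsess := by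
    refine ⟨?_, ?_, ?_, ?_, ?_, ?_⟩ <;> linarith [hαmin.1, hαmin.2, hcase.1]
  have hσ2_pos : 0 < σ2 := by rw [hσ2, hσlim2]; positivity
  convert hlim using 2 with t
  · ring
  · rw [eq_div_iff hσ2_pos.ne', one_mul, hσ2]
    field_simp

/-- Case 3 of the variance lemma: if `1 < α_min < 2`,
`−1 < 2 − α_min − α_sess < 1` and `α_sess > 1`, then
`V(t) ~ σ² t^{4−α_min−α_sess} L_V(t) L_r(t)` as `t → ∞`, where
`σ² = σ_lim²(3−α_min)(2−α_min)/((α_sess−1)(3−α_min−α_sess)(4−α_min−α_sess))` and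
`V(t) = 2∫₀^t∫₀^y r(x) H̄_I(x) dx dy`. -/
theorem variance_asymptotics_case3
    (αmin αsess μmax μW : ℝ)
    (hαmin : 1 < αmin ∧ αmin < 2)
    (hcase : -1 < 2 - αmin - αsess ∧ 2 - αmin - αsess < 1)
    (hαsess : 1 < αsess)
    (hμmax : 0 < μmax) (hμW : 0 < μW)
    (σlim2 : ℝ)
    (hσlim2 : σlim2 = 2 * μmax ^ 2 / (μW ^ 3 * (αmin - 1) * (3 - αmin) * (2 - αmin)))
    (L_r L_V : ℝ → ℝ) (hLr : SlowlyVarying L_r) (hLV : SlowlyVarying L_V)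
    -- the autocovariance `r` of the stationary on-off process
    (r : ℝ → ℝ) (hr_cont : ContinuousOn r (Set.Ici 0))
    (hr : ∀ u > (0:ℝ), r u = σlim2 / 2 * (3 - αmin) * (2 - αmin) * u ^ (1 - αmin) * L_r u)
    -- the survival function `H̄` of the lifetime distribution, with finite mean
    (Hbar : ℝ → ℝ) (hHbar_meas : Measurable Hbar)
    (hHbar_nn : ∀ x, 0 ≤ Hbar x) (hHbar_le : ∀ x > (0:ℝ), Hbar x ≤ 1)
    (hHbar : ∀ x > (0:ℝ), Hbar x = x ^ (-αsess) * L_V x)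
    (hHbar_int : IntegrableOn Hbar (Set.Ioi 0))
    -- the integrated tail `H̄_I`
    (HbarI : ℝ → ℝ) (hHbarI : ∀ x, HbarI x = ∫ z in Set.Ioi x, Hbar z)
    -- the variance of the integrated process
    (V : ℝ → ℝ)
    (hV : ∀ t, V t = 2 * ∫ y in (0:ℝ)..t, ∫ x in (0:ℝ)..y, r x * HbarI x)
    (σ2 : ℝ)
    (hσ2 : σ2 = σlim2 * (3 - αmin) * (2 - αmin)
      / ((αsess - 1) * (3 - αmin - αsess) * (4 - αmin - αsess))) :
    Tendsto (fun t => V t / (σ2 * t ^ (4 - αmin - αsess) * L_V t * L_r t))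
      atTop (nhds 1) :=
  variance_asymptotics_case3_general αmin αsess μmax μW hαmin hcase hαsess hμmax hμW σlim2 hσlim2
    L_r L_V hLr hLV r hr_cont hr Hbar hHbar hHbar_int HbarI hHbarI V hV σ2 hσ2
end

section
/- Assume 1 < α_min < 2, 2 − α_min − α_sess = −1, and that c = ∫₀^∞ r(x) H̄_I(x) dx < ∞. Then for every t > 0, V(Tt)/(T L_V(T) L_r(T)) → ∞ as T → ∞, and V(t) ~ 2ct as t → ∞. -/
/-!
Write `f = r · H̄_I` and `c = ∫₀^∞ f`. Since `V(t) = 2 ∫₀^t F` with `F(y) = ∫₀^y f → c`, the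
Cesàro mean of `F` gives `V(t) ~ 2ct`. For the first claim it remains to see that
`L_V(T) L_r(T) → 0`. Fatou's lemma applied to `t ↦ (xt)^p L(xt) / (x^p L(x))`, which tends to
`t^p` pointwise, shows `∫_{ax}^{bx} u^p L(u) du ≥ κ x^{p+1} L(x)` for large `x`. This bounds
`H̄_I(x) ≥ κ₂ x^{1-α_sess} L_V(x)` and, as `H̄_I` is antitone,
`∫_{x/2}^∞ f ≥ H̄_I(x) ∫_{x/2}^x r ≥ K x^{3-α_min-α_sess} L_V(x) L_r(x) = K L_V(x) L_r(x)`,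
while the left side is the tail of a convergent integral.
-/

open MeasureTheory Filter Set

open Topology Asymptotics

theorem eventually_lt_integral_of_tendsto_ae {ι α : Type*} [MeasurableSpace α] {μ : Measure α}
    {l : Filter ι} [l.IsCountablyGenerated] {F : ι → α → ℝ} {f : α → ℝ}
    (hF_meas : ∀ i, AEMeasurable (F i) μ) (hF_nonneg : ∀ᶠ i in l, 0 ≤ᵐ[μ] F i)
    (hF_int : ∀ᶠ i in l, Integrable (F i) μ)
    (hlim : ∀ᵐ a ∂μ, Tendsto (fun i => F i a) l (𝓝 (f a)))
    {c : ℝ} (hc₀ : 0 ≤ c) (hc : c < ∫ a, f a ∂μ) :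
    ∀ᶠ i in l, c < ∫ a, F i a ∂μ := by
  rcases l.eq_or_neBot with rfl | _
  · exact eventually_bot
  have hf_int : Integrable f μ := Integrable.of_integral_ne_zero (by linarith)
  have hf_le : ENNReal.ofReal (∫ a, f a ∂μ) ≤ ∫⁻ a, ENNReal.ofReal (f a) ∂μ := by
    rw [integral_eq_lintegral_pos_part_sub_lintegral_neg_part hf_int]
    exact (ENNReal.ofReal_le_ofReal (sub_le_self _ ENNReal.toReal_nonneg)).trans
      ENNReal.ofReal_toReal_le
  have hliminf : ∫⁻ a, ENNReal.ofReal (f a) ∂μ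
      = ∫⁻ a, liminf (fun i => ENNReal.ofReal (F i a)) l ∂μ :=
    lintegral_congr_ae <| hlim.mono fun a ha =>
      ((ENNReal.continuous_ofReal.tendsto _).comp ha).liminf_eq.symm
  have hfatou : ENNReal.ofReal c < liminf (fun i => ∫⁻ a, ENNReal.ofReal (F i a) ∂μ) l :=
    calc ENNReal.ofReal c < ENNReal.ofReal (∫ a, f a ∂μ) :=
          (ENNReal.ofReal_lt_ofReal_iff (by linarith)).2 hc
      _ ≤ _ := hf_le.trans_eq hliminf
      _ ≤ _ := lintegral_liminf_le' fun i => (hF_meas i).ennreal_ofReal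
  filter_upwards [eventually_lt_of_lt_liminf hfatou, hF_nonneg, hF_int] with i hi hnn hint
  rw [← ofReal_integral_eq_lintegral_ofReal hint hnn] at hi
  exact (ENNReal.ofReal_lt_ofReal_iff'.1 hi).1

theorem IntegrableOn.of_mul_of_le_abs {α : Type*} [MeasurableSpace α] {μ : Measure α}
    {φ G : α → ℝ} {s : Set α} {c : ℝ} (h : IntegrableOn (fun u => φ u * G u) s μ)
    (hs : MeasurableSet s) (hφ : AEStronglyMeasurable φ (μ.restrict s)) (hc : 0 < c)
    (hG : ∀ u ∈ s, c ≤ |G u|) : IntegrableOn φ s μ := by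
  refine Integrable.mono' (h.norm.const_mul c⁻¹) hφ ?_
  filter_upwards [ae_restrict_mem hs] with u hu
  rw [le_inv_mul_iff₀ hc, norm_mul, Real.norm_eq_abs (G u), mul_comm c]
  exact mul_le_mul_of_nonneg_left (hG u hu) (norm_nonneg (φ u))

theorem setIntegral_Ioi_pos {f : ℝ → ℝ} {a : ℝ} (hf : IntegrableOn f (Ioi a))
    (hpos : ∀ x > a, 0 < f x) : 0 < ∫ x in Ioi a, f x := by
  rw [setIntegral_pos_iff_support_of_nonneg_ae
    (ae_restrict_of_forall_mem measurableSet_Ioi fun x hx => (hpos x hx).le) hf]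
  calc (0 : ENNReal) < volume (Ioi a) := by simp
    _ ≤ volume (Function.support f ∩ Ioi a) := measure_mono fun x hx => ⟨(hpos x hx).ne', hx⟩

theorem antitoneOn_setIntegral_Ioi {f : ℝ → ℝ} {a : ℝ} (hf_nonneg : ∀ x > a, 0 ≤ f x)
    (hf : IntegrableOn f (Ioi a)) : AntitoneOn (fun x => ∫ u in Ioi x, f u) (Ici a) :=
  fun _ hx _ _ hxy => setIntegral_mono_set (hf.mono_set (Ioi_subset_Ioi hx))
    (ae_restrict_of_forall_mem measurableSet_Ioi fun u hu => hf_nonneg u (lt_of_le_of_lt hx hu))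
    (LE.le.eventuallyLE (Ioi_subset_Ioi hxy))

theorem tendsto_setIntegral_Ioi_atTop_zero {f : ℝ → ℝ} {a : ℝ} (hf : IntegrableOn f (Ioi a)) :
    Tendsto (fun x => ∫ u in Ioi x, f u) atTop (𝓝 0) := by
  have h := tendsto_setIntegral_of_antitone (μ := volume) (s := fun x : ℝ => Ioi x)
    (fun _ => measurableSet_Ioi) (fun _ _ h => Ioi_subset_Ioi h) ⟨a, hf⟩
  have hempty : ⋂ x : ℝ, Ioi x = ∅ := iInter_eq_empty_iff.2 fun x => ⟨x, lt_irrefl x⟩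
  rwa [hempty, setIntegral_empty] at h

theorem setIntegral_Ioc_comp_mul_left (φ : ℝ → ℝ) {a b x : ℝ} (hab : a ≤ b) (hx : 0 < x) :
    ∫ t in Ioc a b, φ (x * t) = x⁻¹ * ∫ u in Ioc (x * a) (x * b), φ u := by
  rw [← intervalIntegral.integral_of_le hab,
    ← intervalIntegral.integral_of_le (mul_le_mul_of_nonneg_left hab hx.le),
    intervalIntegral.integral_comp_mul_left φ hx.ne', smul_eq_mul]

theorem Filter.Tendsto.cesaro_intervalIntegral {F : ℝ → ℝ} {c : ℝ} (hF : Tendsto F atTop (𝓝 c))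
    (hF_int : ∀ t ≥ 0, IntervalIntegrable F volume 0 t) :
    Tendsto (fun t => (∫ y in (0:ℝ)..t, F y) / t) atTop (𝓝 c) := by
  have hG_int : ∀ t ≥ 0, IntervalIntegrable (fun y => F y - c) volume 0 t :=
    fun t ht => (hF_int t ht).sub intervalIntegrable_const
  have hlittle : (fun t => ∫ y in (0:ℝ)..t, (F y - c)) =o[atTop] id := by
    refine isLittleO_iff.2 fun ε hε => ?_
    obtain ⟨A, hA⟩ := ((tendsto_sub_nhds_zero_iff.2 hF).eventually
      (Metric.closedBall_mem_nhds 0 (half_pos hε))).and (eventually_ge_atTop 0)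
      |>.exists_forall_of_atTop
    set B := ∫ y in (0:ℝ)..A, (F y - c)
    filter_upwards [eventually_ge_atTop A, eventually_ge_atTop (2 * ‖B‖ / ε)] with t htA htB
    have hA₀ : 0 ≤ A := (hA A le_rfl).2
    have htail : ‖∫ y in A..t, (F y - c)‖ ≤ ε / 2 * |t - A| :=
      intervalIntegral.norm_integral_le_of_norm_le_const fun y hy => by
        rw [uIoc_of_le htA] at hy
        simpa using (hA y hy.1.le).1
    calc ‖∫ y in (0:ℝ)..t, (F y - c)‖
        = ‖B + ∫ y in A..t, (F y - c)‖ := by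
          rw [intervalIntegral.integral_add_adjacent_intervals (hG_int A hA₀)
            ((hG_int A hA₀).symm.trans (hG_int t (hA₀.trans htA)))]
      _ ≤ ‖B‖ + ε / 2 * |t - A| := (norm_add_le _ _).trans (add_le_add le_rfl htail)
      _ ≤ ε * ‖id t‖ := by
        rw [abs_of_nonneg (sub_nonneg.2 htA), id, Real.norm_of_nonneg (hA₀.trans htA)]
        rw [div_le_iff₀ hε] at htB
        nlinarith
  have h := (hlittle.tendsto_div_nhds_zero).add_const c
  rw [zero_add] at h
  refine h.congr' ?_
  filter_upwards [eventually_gt_atTop 0] with t ht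
  rw [intervalIntegral.integral_sub (hF_int t ht.le) intervalIntegrable_const,
    intervalIntegral.integral_const, smul_eq_mul, id]
  field_simp
  ring

theorem tendsto_integral_integral_div {f : ℝ → ℝ} (hf : IntegrableOn f (Ioi 0)) :
    Tendsto (fun t => (∫ y in (0:ℝ)..t, ∫ x in (0:ℝ)..y, f x) / t) atTop
      (𝓝 (∫ x in Ioi 0, f x)) :=
  (intervalIntegral_tendsto_integral_Ioi 0 hf tendsto_id).cesaro_intervalIntegral
    fun _ ht => ContinuousOn.intervalIntegrable <| intervalIntegral.continuousOn_primitive_interval'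
      ((intervalIntegrable_iff_integrableOn_Ioc_of_le ht).2 (hf.mono_set Ioc_subset_Ioi_self))
      left_mem_uIcc

namespace SlowlyVarying

variable {L : ℝ → ℝ}

theorem pos (hL : SlowlyVarying L) {x : ℝ} (hx : 0 < x) : 0 < L x := hL.2.1 x hx

theorem rpow_mul_pos (hL : SlowlyVarying L) (p : ℝ) {x : ℝ} (hx : 0 < x) : 0 < x ^ p * L x :=
  mul_pos (Real.rpow_pos_of_pos hx p) (hL.pos hx)

theorem measurable_rpow_mul (hL : SlowlyVarying L) (p : ℝ) :
    Measurable fun u : ℝ => u ^ p * L u :=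
  (measurable_id.pow_const p).mul hL.1

theorem tendsto_rpow_mul_comp_mul_div (hL : SlowlyVarying L) (p : ℝ) {t : ℝ} (ht : 0 < t) :
    Tendsto (fun x => (x * t) ^ p * L (x * t) / (x ^ p * L x)) atTop (𝓝 (t ^ p)) := by
  have h := (hL.2.2 t ht).const_mul (t ^ p)
  rw [mul_one] at h
  refine h.congr' ?_
  filter_upwards [eventually_gt_atTop 0] with x hx
  have := hL.pos hx
  have := (Real.rpow_pos_of_pos hx p).ne'
  rw [Real.mul_rpow hx.le ht.le, mul_comm t x]
  field_simp

theorem exists_pos_eventually_le_integral_rpow_mul (hL : SlowlyVarying L) (p : ℝ) {a b : ℝ}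
    (ha : 0 < a) (hab : a < b)
    (hint : ∀ᶠ x in atTop, IntegrableOn (fun u => u ^ p * L u) (Ioc (x * a) (x * b))) :
    ∃ κ > 0, ∀ᶠ x in atTop, κ * (x ^ (p + 1) * L x) ≤ ∫ u in Ioc (x * a) (x * b), u ^ p * L u := by
  set φ : ℝ → ℝ := fun u => u ^ p * L u
  have hpow_pos : 0 < ∫ t in Ioc a b, t ^ p := by
    rw [← intervalIntegral.integral_of_le hab.le]
    refine intervalIntegral.intervalIntegral_pos_of_pos_on
      (intervalIntegral.intervalIntegrable_rpow (Or.inr ?_))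
      (fun t ht => Real.rpow_pos_of_pos (ha.trans ht.1) p) hab
    rw [uIcc_of_le hab.le]
    exact fun h => lt_irrefl 0 (ha.trans_le h.1)
  refine ⟨(∫ t in Ioc a b, t ^ p) / 2, half_pos hpow_pos, ?_⟩
  have hμ : ∀ᵐ t ∂(volume.restrict (Ioc a b)), 0 < t :=
    ae_restrict_of_forall_mem measurableSet_Ioc fun t ht => ha.trans ht.1
  have hF_nonneg : ∀ᶠ x in atTop,
      0 ≤ᵐ[volume.restrict (Ioc a b)] fun t => φ (x * t) / φ x := by
    filter_upwards [eventually_gt_atTop 0] with x hx₀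
    filter_upwards [hμ] with t ht
    exact div_nonneg (hL.rpow_mul_pos p (mul_pos hx₀ ht)).le (hL.rpow_mul_pos p hx₀).le
  have hF_int : ∀ᶠ x in atTop, IntegrableOn (fun t => φ (x * t) / φ x) (Ioc a b) := by
    filter_upwards [hint, eventually_gt_atTop 0] with x hx hx₀
    have h := ((intervalIntegrable_iff_integrableOn_Ioc_of_le
      (mul_le_mul_of_nonneg_left hab.le hx₀.le)).2 hx).comp_mul_left (c := x)
    rw [mul_div_cancel_left₀ _ hx₀.ne', mul_div_cancel_left₀ _ hx₀.ne',
      intervalIntegrable_iff_integrableOn_Ioc_of_le hab.le] at h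
    exact h.div_const _
  have hfatou := eventually_lt_integral_of_tendsto_ae (F := fun x t => φ (x * t) / φ x)
    (fun x => ((hL.measurable_rpow_mul p).comp (measurable_const_mul x)).div_const _
      |>.aemeasurable) hF_nonneg hF_int
    (hμ.mono fun t ht => hL.tendsto_rpow_mul_comp_mul_div p ht)
    (half_pos hpow_pos).le (half_lt_self hpow_pos)
  filter_upwards [hfatou, eventually_gt_atTop 0] with x hx hx₀
  rw [integral_div, setIntegral_Ioc_comp_mul_left φ hab.le hx₀,
    lt_div_iff₀ (hL.rpow_mul_pos p hx₀), ← div_eq_inv_mul, lt_div_iff₀ hx₀] at hx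
  have hxφ : x ^ (p + 1) * L x = x * φ x := by
    simp only [φ, Real.rpow_add_one hx₀.ne']; ring
  rw [hxφ, mul_left_comm, mul_comm x]
  exact hx.le

theorem exists_pos_eventually_le_setIntegral_Ioi (hL : SlowlyVarying L) {g : ℝ → ℝ} {q : ℝ}
    (hg : ∀ x > 0, g x = x ^ (-q) * L x) (hg_int : IntegrableOn g (Ioi 0)) :
    ∃ κ > 0, ∀ᶠ x in atTop, κ * (x ^ (1 - q) * L x) ≤ ∫ z in Ioi x, g z := by
  have hIoc : ∀ x : ℝ, 0 < x → Ioc (x * 1) (x * 2) ⊆ Ioi x := fun x _ u hu =>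
    mem_Ioi.2 (by linarith [hu.1])
  have hg_eq : ∀ x : ℝ, 0 < x → EqOn g (fun u => u ^ (-q) * L u) (Ioc (x * 1) (x * 2)) :=
    fun x hx u hu => hg u (hx.trans (hIoc x hx hu))
  obtain ⟨κ, hκ, hlow⟩ := hL.exists_pos_eventually_le_integral_rpow_mul (-q) one_pos one_lt_two
    (by filter_upwards [eventually_gt_atTop 0] with x hx
        exact (hg_int.mono_set ((hIoc x hx).trans (Ioi_subset_Ioi hx.le))).congr_fun
          (hg_eq x hx) measurableSet_Ioc)
  refine ⟨κ, hκ, ?_⟩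
  filter_upwards [hlow, eventually_gt_atTop 0] with x hx hx₀
  rw [neg_add_eq_sub, ← setIntegral_congr_fun measurableSet_Ioc (hg_eq x hx₀)] at hx
  refine hx.trans (setIntegral_mono_set (hg_int.mono_set (Ioi_subset_Ioi hx₀.le)) ?_
    (LE.le.eventuallyLE (hIoc x hx₀)))
  refine ae_restrict_of_forall_mem measurableSet_Ioi fun u hu => ?_
  rw [hg u (hx₀.trans hu)]
  exact (hL.rpow_mul_pos _ (hx₀.trans hu)).le

end SlowlyVarying

section IntegratedTail

variable {p q κ : ℝ} {L_r L_V G : ℝ → ℝ}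

theorem exists_pos_eventually_le_setIntegral_Ioi_rpow_mul_mul (hLr : SlowlyVarying L_r)
    (hLV : SlowlyVarying L_V) (hG_anti : AntitoneOn G (Ici 0)) (hκ : 0 < κ)
    (hG : ∀ᶠ x in atTop, κ * (x ^ (1 - q) * L_V x) ≤ G x)
    (h : IntegrableOn (fun x => x ^ p * L_r x * G x) (Ioi 0)) :
    ∃ K > 0, ∀ᶠ x in atTop,
      K * (x ^ (p + 2 - q) * (L_V x * L_r x)) ≤ ∫ u in Ioi (x * 2⁻¹), u ^ p * L_r u * G u := by
  have hG_pos : ∀ x : ℝ, 0 < x → 0 < G x := fun x hx => by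
    obtain ⟨y, ⟨hGy, hy₀⟩, hxy⟩ :=
      ((hG.and (eventually_gt_atTop 0)).and (eventually_ge_atTop x)).exists
    exact (mul_pos hκ (hLV.rpow_mul_pos _ hy₀)).trans_le
      (hGy.trans (hG_anti (mem_Ici.2 hx.le) (mem_Ici.2 hy₀.le) hxy))
  have hIoc : ∀ x : ℝ, 0 < x → Ioc (x * 2⁻¹) (x * 1) ⊆ Ioi 0 := fun x hx u hu =>
    mem_Ioi.2 (lt_trans (by positivity) hu.1)
  have hG_le : ∀ x : ℝ, 0 < x → ∀ u ∈ Ioc (x * 2⁻¹) (x * 1), G x ≤ G u := fun x hx u hu =>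
    hG_anti (mem_Ici.2 (hIoc x hx hu).le) (mem_Ici.2 hx.le) (by simpa using hu.2)
  have hφ_int : ∀ x : ℝ, 0 < x →
      IntegrableOn (fun u => u ^ p * L_r u) (Ioc (x * 2⁻¹) (x * 1)) := fun x hx =>
    IntegrableOn.of_mul_of_le_abs (h.mono_set (hIoc x hx)) measurableSet_Ioc
      (hLr.measurable_rpow_mul p).aestronglyMeasurable (hG_pos x hx)
      fun u hu => (hG_le x hx u hu).trans (le_abs_self _)
  obtain ⟨κ', hκ', hI⟩ := hLr.exists_pos_eventually_le_integral_rpow_mul p (a := 2⁻¹) (b := 1)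
    (by norm_num) (by norm_num) (eventually_gt_atTop 0 |>.mono hφ_int)
  refine ⟨κ * κ', mul_pos hκ hκ', ?_⟩
  filter_upwards [hG, hI, eventually_gt_atTop 0] with x hGx hIx hx₀
  calc κ * κ' * (x ^ (p + 2 - q) * (L_V x * L_r x))
      = κ * (x ^ (1 - q) * L_V x) * (κ' * (x ^ (p + 1) * L_r x)) := by
        rw [show p + 2 - q = (1 - q) + (p + 1) by ring, Real.rpow_add hx₀]; ring
    _ ≤ G x * ∫ u in Ioc (x * 2⁻¹) (x * 1), u ^ p * L_r u :=
        mul_le_mul hGx hIx (by positivity [hLr.rpow_mul_pos (p + 1) hx₀]) (hG_pos x hx₀).le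
    _ = ∫ u in Ioc (x * 2⁻¹) (x * 1), u ^ p * L_r u * G x := by
        rw [integral_mul_const, mul_comm]
    _ ≤ ∫ u in Ioc (x * 2⁻¹) (x * 1), u ^ p * L_r u * G u :=
        setIntegral_mono_on ((hφ_int x hx₀).mul_const _) (h.mono_set (hIoc x hx₀))
          measurableSet_Ioc fun u hu => mul_le_mul_of_nonneg_left (hG_le x hx₀ u hu)
            (hLr.rpow_mul_pos p (hIoc x hx₀ hu)).le
    _ ≤ ∫ u in Ioi (x * 2⁻¹), u ^ p * L_r u * G u :=
        setIntegral_mono_set (h.mono_set (Ioi_subset_Ioi (by positivity)))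
          (ae_restrict_of_forall_mem measurableSet_Ioi fun u hu => by
            have hu₀ : 0 < u := lt_trans (by positivity) hu
            exact (mul_pos (hLr.rpow_mul_pos p hu₀) (hG_pos u hu₀)).le)
          (LE.le.eventuallyLE Ioc_subset_Ioi_self)

theorem tendsto_rpow_mul_mul_zero_of_integrableOn (hLr : SlowlyVarying L_r)
    (hLV : SlowlyVarying L_V) (hG_anti : AntitoneOn G (Ici 0)) (hκ : 0 < κ)
    (hG : ∀ᶠ x in atTop, κ * (x ^ (1 - q) * L_V x) ≤ G x)
    (h : IntegrableOn (fun x => x ^ p * L_r x * G x) (Ioi 0)) :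
    Tendsto (fun x => x ^ (p + 2 - q) * (L_V x * L_r x)) atTop (𝓝 0) := by
  obtain ⟨K, hK, hlow⟩ :=
    exists_pos_eventually_le_setIntegral_Ioi_rpow_mul_mul hLr hLV hG_anti hκ hG h
  have htail := ((tendsto_setIntegral_Ioi_atTop_zero h).comp
    (tendsto_id.atTop_mul_const (by norm_num : (0:ℝ) < 2⁻¹))).div_const K
  rw [zero_div] at htail
  refine squeeze_zero' ?_ ?_ htail
  · filter_upwards [eventually_gt_atTop 0] with x hx₀
    exact (mul_pos (Real.rpow_pos_of_pos hx₀ _) (mul_pos (hLV.pos hx₀) (hLr.pos hx₀))).le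
  · filter_upwards [hlow] with x hx
    rw [le_div_iff₀ hK, mul_comm]
    exact hx

end IntegratedTail

theorem tendsto_comp_mul_div_mul_atTop {V ℓ : ℝ → ℝ} {a : ℝ} (ha : 0 < a)
    (hV : Tendsto (fun t => V t / (a * t)) atTop (𝓝 1)) (hℓ : Tendsto ℓ atTop (𝓝[>] 0))
    {t : ℝ} (ht : 0 < t) : Tendsto (fun T => V (T * t) / (T * ℓ T)) atTop atTop := by
  refine ((hV.comp (tendsto_id.atTop_mul_const ht)).pos_mul_atTop one_pos
    (hℓ.inv_tendsto_nhdsGT_zero.const_mul_atTop (mul_pos ha ht))).congr' ?_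
  filter_upwards [eventually_gt_atTop 0, tendsto_nhdsWithin_iff.1 hℓ |>.2] with T hT hℓT
  have : ℓ T ≠ 0 := (mem_Ioi.1 hℓT).ne'
  simp only [Function.comp_apply, id, Pi.inv_apply]
  field_simp

theorem variance_asymptotics_boundary_general
    (αmin αsess μmax μW : ℝ)
    (hαmin : 1 < αmin ∧ αmin < 2)
    (hcase : 2 - αmin - αsess = -1)
    (hμmax : 0 < μmax) (hμW : 0 < μW)
    (σlim2 : ℝ)
    (hσlim2 : σlim2 = 2 * μmax ^ 2 / (μW ^ 3 * (αmin - 1) * (3 - αmin) * (2 - αmin)))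
    (L_r L_V : ℝ → ℝ) (hLr : SlowlyVarying L_r) (hLV : SlowlyVarying L_V)
    -- the autocovariance `r` of the stationary on-off process
    (r : ℝ → ℝ)
    (hr : ∀ u > (0:ℝ), r u = σlim2 / 2 * (3 - αmin) * (2 - αmin) * u ^ (1 - αmin) * L_r u)
    -- the survival function `H̄` of the lifetime distribution, with finite mean
    (Hbar : ℝ → ℝ)
    (hHbar : ∀ x > (0:ℝ), Hbar x = x ^ (-αsess) * L_V x)
    (hHbar_int : IntegrableOn Hbar (Set.Ioi 0))
    -- the integrated tail `H̄_I`
    (HbarI : ℝ → ℝ) (hHbarI : ∀ x, HbarI x = ∫ z in Set.Ioi x, Hbar z)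
    -- the assumption `c = ∫₀^∞ r(x) H̄_I(x) dx < ∞`
    (hc_int : IntegrableOn (fun x => r x * HbarI x) (Set.Ioi 0))
    -- the variance of the integrated process
    (V : ℝ → ℝ)
    (hV : ∀ t, V t = 2 * ∫ y in (0:ℝ)..t, ∫ x in (0:ℝ)..y, r x * HbarI x) :
    (∀ t > (0:ℝ),
      Tendsto (fun T => V (T * t) / (T * L_V T * L_r T)) atTop atTop) ∧
    Tendsto (fun t => V t / (2 * (∫ x in Set.Ioi (0:ℝ), r x * HbarI x) * t))
      atTop (nhds 1) := by
  obtain ⟨hα1, hα2⟩ := hαmin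
  have hC : 0 < σlim2 / 2 * (3 - αmin) * (2 - αmin) := by
    have : 0 < αmin - 1 := by linarith
    have : 0 < 2 - αmin := by linarith
    have : 0 < 3 - αmin := by linarith
    rw [hσlim2]
    positivity
  set C := σlim2 / 2 * (3 - αmin) * (2 - αmin)
  set c := ∫ x in Ioi 0, r x * HbarI x
  have hHbar_pos : ∀ x > 0, 0 < Hbar x := fun x hx => (hHbar x hx).symm ▸ hLV.rpow_mul_pos _ hx
  have hf : ∀ x > 0, r x * HbarI x = C * (x ^ (1 - αmin) * L_r x * ∫ z in Ioi x, Hbar z) :=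
    fun x hx => by rw [hr x hx, hHbarI]; ring
  have hc : 0 < c := setIntegral_Ioi_pos hc_int fun x hx => by
    rw [hf x hx]
    exact mul_pos hC (mul_pos (hLr.rpow_mul_pos _ hx) (setIntegral_Ioi_pos
      (hHbar_int.mono_set (Ioi_subset_Ioi hx.le)) fun z hz => hHbar_pos z (hx.trans hz)))
  have hvar : Tendsto (fun t => V t / (2 * c * t)) atTop (𝓝 1) := by
    have h := (tendsto_integral_integral_div hc_int).div_const c
    rw [div_self hc.ne'] at h
    exact h.congr fun t => by rw [hV]; field_simp
  have hLL : Tendsto (fun T => L_V T * L_r T) atTop (𝓝 0) := by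
    obtain ⟨κ, hκ, hG⟩ := hLV.exists_pos_eventually_le_setIntegral_Ioi hHbar hHbar_int
    have h := tendsto_rpow_mul_mul_zero_of_integrableOn (p := 1 - αmin) hLr hLV
      (antitoneOn_setIntegral_Ioi (fun x hx => (hHbar_pos x hx).le) hHbar_int) hκ hG
      (IntegrableOn.congr_fun (hc_int.const_mul C⁻¹)
        (fun x hx => by rw [hf x hx, inv_mul_cancel_left₀ hC.ne']) measurableSet_Ioi)
    simpa only [show 1 - αmin + 2 - αsess = 0 by linarith, Real.rpow_zero, one_mul] using h
  refine ⟨fun t ht => ?_, hvar⟩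
  simpa only [mul_assoc] using tendsto_comp_mul_div_mul_atTop (mul_pos two_pos hc) hvar
    (tendsto_nhdsWithin_iff.2 ⟨hLL, eventually_gt_atTop 0 |>.mono fun T hT =>
      mul_pos (hLV.pos hT) (hLr.pos hT)⟩) ht

/-- boundary case of the variance lemma: if `1 < α_min < 2`,
`2 − α_min − α_sess = −1`, and `c = ∫₀^∞ r(x) H̄_I(x) dx < ∞`, then for every `t > 0`,
`V(Tt)/(T L_V(T) L_r(T)) → ∞` as `T → ∞`, and `V(t) ~ 2ct` as `t → ∞`. Here
`V(t) = 2∫₀^t∫₀^y r(x) H̄_I(x) dx dy`. -/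
theorem variance_asymptotics_boundary
    (αmin αsess μmax μW : ℝ)
    (hαmin : 1 < αmin ∧ αmin < 2)
    (hcase : 2 - αmin - αsess = -1)
    (hμmax : 0 < μmax) (hμW : 0 < μW)
    (σlim2 : ℝ)
    (hσlim2 : σlim2 = 2 * μmax ^ 2 / (μW ^ 3 * (αmin - 1) * (3 - αmin) * (2 - αmin)))
    (L_r L_V : ℝ → ℝ) (hLr : SlowlyVarying L_r) (hLV : SlowlyVarying L_V)
    -- the autocovariance `r` of the stationary on-off process
    (r : ℝ → ℝ) (hr_cont : ContinuousOn r (Set.Ici 0))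
    (hr : ∀ u > (0:ℝ), r u = σlim2 / 2 * (3 - αmin) * (2 - αmin) * u ^ (1 - αmin) * L_r u)
    -- the survival function `H̄` of the lifetime distribution, with finite mean
    (Hbar : ℝ → ℝ) (hHbar_meas : Measurable Hbar)
    (hHbar_nn : ∀ x, 0 ≤ Hbar x) (hHbar_le : ∀ x > (0:ℝ), Hbar x ≤ 1)
    (hHbar : ∀ x > (0:ℝ), Hbar x = x ^ (-αsess) * L_V x)
    (hHbar_int : IntegrableOn Hbar (Set.Ioi 0))
    -- the integrated tail `H̄_I`
    (HbarI : ℝ → ℝ) (hHbarI : ∀ x, HbarI x = ∫ z in Set.Ioi x, Hbar z)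
    -- the assumption `c = ∫₀^∞ r(x) H̄_I(x) dx < ∞`
    (hc_int : IntegrableOn (fun x => r x * HbarI x) (Set.Ioi 0))
    -- the variance of the integrated process
    (V : ℝ → ℝ)
    (hV : ∀ t, V t = 2 * ∫ y in (0:ℝ)..t, ∫ x in (0:ℝ)..y, r x * HbarI x) :
    (∀ t > (0:ℝ),
      Tendsto (fun T => V (T * t) / (T * L_V T * L_r T)) atTop atTop) ∧
    Tendsto (fun t => V t / (2 * (∫ x in Set.Ioi (0:ℝ), r x * HbarI x) * t))
      atTop (nhds 1) :=
  variance_asymptotics_boundary_general αmin αsess μmax μW hαmin hcase hμmax hμW σlim2 hσlim2 L_r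
    L_V hLr hLV r hr Hbar hHbar hHbar_int HbarI hHbarI hc_int V hV
end

section
/- Let L be slowly varying at infinity with ∫₁^∞ L(t)/t dt < ∞. Then (1/L(x)) ∫_x^∞ L(t)/t dt → ∞ as x → ∞. -/
open MeasureTheory Filter Set

/-- The lintegral of `1/s` over `(1,∞)` is infinite. -/
lemma lintegral_inv_Ioi_one_eq_top :
    ∫⁻ s in Set.Ioi (1 : ℝ), ENNReal.ofReal s⁻¹ = ⊤ := by
  by_contra h
  have hlt : ∫⁻ s in Set.Ioi (1 : ℝ), ENNReal.ofReal s⁻¹ < ⊤ := lt_top_iff_ne_top.mpr h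
  have hnn : 0 ≤ᵐ[volume.restrict (Set.Ioi (1 : ℝ))] fun s : ℝ => s⁻¹ := by
    filter_upwards [ae_restrict_mem measurableSet_Ioi] with s hs
    exact inv_nonneg.mpr (le_of_lt (lt_trans one_pos hs))
  have hint : IntegrableOn (fun s : ℝ => s⁻¹) (Set.Ioi 1) :=
    ⟨measurable_inv.aestronglyMeasurable, (hasFiniteIntegral_iff_ofReal hnn).mpr hlt⟩
  exact not_IntegrableOn_Ioi_inv hint

lemma aux_div (A u lu s : ℝ) (hu : u ≠ 0) : A / (u * s) * (u / lu) = A / (lu * s) := by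
  rw [div_mul_div_comm, mul_comm A u, mul_assoc u s lu, mul_div_mul_left _ _ hu, mul_comm s lu]

/-- if `L` is slowly varying at infinity and `∫₁^∞ L(t)/t dt < ∞`, then
`(1/L(x)) ∫_x^∞ L(t)/t dt → ∞` as `x → ∞`. -/
theorem slowly_varying_integrated_ratio_tendsto_atTop
    (L : ℝ → ℝ) (hL : SlowlyVarying L)
    (hInt : IntegrableOn (fun t => L t / t) (Set.Ioi 1)) :
    Tendsto (fun x => (∫ t in Set.Ioi x, L t / t) / L x) atTop atTop := by
  obtain ⟨hmeas, hpos, hslow⟩ := hL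
  rw [tendsto_atTop]
  intro b
  by_contra hb
  have hfreq : ∃ᶠ x in atTop,
      (1 ≤ x ∧ (∫ t in Set.Ioi x, L t / t) / L x < b) := by
    have h1 : ∃ᶠ x in atTop, (∫ t in Set.Ioi x, L t / t) / L x < b := by
      simpa only [not_le] using (Filter.not_eventually.mp hb)
    exact (h1.and_eventually (eventually_ge_atTop 1)).mono fun x hx => ⟨hx.2, hx.1⟩
  obtain ⟨u, hu, hup⟩ := Filter.exists_seq_forall_of_frequently hfreq
  -- basic facts about the sequence u
  have hu1 : ∀ n, 1 ≤ u n := fun n => (hup n).1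
  have hu0 : ∀ n, 0 < u n := fun n => lt_of_lt_of_le one_pos (hu1 n)
  have hLu : ∀ n, 0 < L (u n) := fun n => hpos _ (hu0 n)
  set g : ℕ → ℝ → ℝ := fun n s => L (u n * s) / (L (u n) * s) with hg
  -- measurability of g n
  have hgmeas : ∀ n, Measurable (g n) := by
    intro n
    exact (hmeas.comp (measurable_const_mul _)).div (measurable_const_mul _)
  -- g n is nonnegative a.e. on Ioi 1
  have hgnn : ∀ n, 0 ≤ᵐ[volume.restrict (Set.Ioi (1 : ℝ))] g n := by
    intro n
    filter_upwards [ae_restrict_mem measurableSet_Ioi] with s hs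
    have hs0 : 0 < s := lt_trans one_pos hs
    exact le_of_lt (div_pos (hpos _ (mul_pos (hu0 n) hs0)) (mul_pos (hLu n) hs0))
  -- integrability of g n on Ioi 1
  have hgint : ∀ n, IntegrableOn (g n) (Set.Ioi 1) := by
    intro n
    have h1 : IntegrableOn (fun s => L (u n * s) / (u n * s)) (Set.Ioi 1) := by
      rw [integrableOn_Ioi_comp_mul_left_iff (fun t => L t / t) 1 (hu0 n), mul_one]
      exact hInt.mono_set (Set.Ioi_subset_Ioi (hu1 n))
    refine IntegrableOn.congr_fun (h1.mul_const (u n / L (u n)))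
      (fun s hs => ?_) measurableSet_Ioi
    have hs0 : (0 : ℝ) < s := lt_trans one_pos hs
    exact aux_div _ _ _ _ (hu0 n).ne'
  -- the integral identity
  have hkey : ∀ n, ∫ s in Set.Ioi (1 : ℝ), g n s
      = (∫ t in Set.Ioi (u n), L t / t) / L (u n) := by
    intro n
    have e1 : Set.EqOn (g n)
        (fun s => (L (u n * s) / (u n * s)) * (u n / L (u n))) (Set.Ioi 1) := by
      intro s hs
      have hs0 : (0 : ℝ) < s := lt_trans one_pos hs
      exact (aux_div _ _ _ _ (hu0 n).ne').symm
    rw [setIntegral_congr_fun measurableSet_Ioi e1, integral_mul_const,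
      integral_comp_mul_left_Ioi (fun t => L t / t) 1 (hu0 n), mul_one, smul_eq_mul]
    rw [mul_right_comm, show (u n)⁻¹ * (u n / L (u n)) = (L (u n))⁻¹ by
        rw [div_eq_mul_inv, ← mul_assoc, inv_mul_cancel₀ (hu0 n).ne', one_mul],
      inv_mul_eq_div]
  -- each lintegral is bounded by ofReal b
  have hbound : ∀ n, (∫⁻ s in Set.Ioi (1 : ℝ), ENNReal.ofReal (g n s))
      ≤ ENNReal.ofReal b := by
    intro n
    rw [← ofReal_integral_eq_lintegral_ofReal (hgint n) (hgnn n)]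
    exact ENNReal.ofReal_le_ofReal (le_of_lt (by rw [hkey n]; exact (hup n).2))
  -- pointwise limit : g n s → 1/s
  have hlim : ∀ s : ℝ, 1 < s →
      Filter.liminf (fun n => ENNReal.ofReal (g n s)) atTop = ENNReal.ofReal s⁻¹ := by
    intro s hs
    have hs0 : (0 : ℝ) < s := lt_trans one_pos hs
    have h1 : Tendsto (fun n => L (s * u n) / L (u n)) atTop (nhds 1) :=
      (hslow s hs0).comp hu
    have h2 : Tendsto (fun n => g n s) atTop (nhds s⁻¹) := by
      have := h1.mul_const s⁻¹
      rw [one_mul] at this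
      refine this.congr fun n => ?_
      show L (s * u n) / L (u n) * s⁻¹ = L (u n * s) / (L (u n) * s)
      rw [mul_comm (u n) s, ← div_div]
      ring
    have h3 : Tendsto (fun n => ENNReal.ofReal (g n s)) atTop
        (nhds (ENNReal.ofReal s⁻¹)) :=
      (ENNReal.continuous_ofReal.tendsto _).comp h2
    exact h3.liminf_eq
  -- Fatou
  have hfatou : (∫⁻ s in Set.Ioi (1 : ℝ),
        Filter.liminf (fun n => ENNReal.ofReal (g n s)) atTop)
      ≤ Filter.liminf (fun n => ∫⁻ s in Set.Ioi (1 : ℝ), ENNReal.ofReal (g n s)) atTop :=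
    lintegral_liminf_le fun n => ENNReal.measurable_ofReal.comp (hgmeas n)
  have hLHS : (∫⁻ s in Set.Ioi (1 : ℝ),
      Filter.liminf (fun n => ENNReal.ofReal (g n s)) atTop) = ⊤ := by
    rw [← lintegral_inv_Ioi_one_eq_top]
    refine lintegral_congr_ae ?_
    filter_upwards [ae_restrict_mem measurableSet_Ioi] with s hs
    exact hlim s hs
  have hRHS : Filter.liminf
      (fun n => ∫⁻ s in Set.Ioi (1 : ℝ), ENNReal.ofReal (g n s)) atTop
      ≤ ENNReal.ofReal b :=
    Filter.liminf_le_of_frequently_le (Filter.Frequently.of_forall hbound)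
  have : (⊤ : ENNReal) ≤ ENNReal.ofReal b := hLHS ▸ hfatou.trans hRHS
  exact (ENNReal.ofReal_ne_top) (top_le_iff.mp this)
end

section
/- Let p, λ > 0, let N be a Poisson random variable with mean λp, and let (A_u, B_u), u ≥ 1, be i.i.d. pairs independent of N distributed as (W(s) − μ_W, W(t) − μ_W), where W is a stationary {0,1}-valued process with mean μ_W, variance σ_W² = μ_W(1 − μ_W), and autocovariance r. Then E[(λ^{−1/2} Σ_{u=1}^{N} (B_u − A_u))⁴] = (2p/λ)(σ_W² − r(t−s)) + 12 p² (σ_W² − r(t−s))². -/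
/-!
Each increment `D_u = W_u(t) − W_u(s)` takes values in `{−1, 0, 1}`, so it is centred and
`E D² = E D⁴ = v := 2 (σ_W² − r(t−s))`. Expanding `(S_k + D_k)⁴` binomially, independence gives
`E S_k⁴ = k v + 3 k (k − 1) v²` for the partial sums. Since `N` is independent of the whole
sequence, integrating first over the sequence and then over `N` (Fubini for the product law)
gives `E S_N⁴ = v E N + 3 v² E N(N − 1) = v λp + 3 v² (λp)²` by the Poisson factorial moments,
and the factor `λ⁻²` turns this into the claim.
-/

open MeasureTheory Filter Set ProbabilityTheory

/-- `N` is a Poisson random variable with mean `m`: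
`P(N = k) = e^{−m} m^k / k!` for every `k`. -/
def IsPoissonRV {Ω : Type*} [MeasurableSpace Ω] (P : Measure Ω) (N : Ω → ℕ)
    (m : ℝ) : Prop :=
  ∀ k : ℕ, P {ω | N ω = k}
    = ENNReal.ofReal (Real.exp (-m) * m ^ k / (Nat.factorial k))

open Finset
open scoped NNReal Nat

section ZeroOne

variable {a b : ℝ}

lemma abs_sub_le_one_of_zero_or_one (ha : a = 0 ∨ a = 1) (hb : b = 0 ∨ b = 1) :
    |b - a| ≤ 1 := by
  rcases ha with rfl | rfl <;> rcases hb with rfl | rfl <;> norm_num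

lemma sub_sq_of_zero_or_one (ha : a = 0 ∨ a = 1) (hb : b = 0 ∨ b = 1) :
    (b - a) ^ 2 = a + b - 2 * (a * b) := by
  rcases ha with rfl | rfl <;> rcases hb with rfl | rfl <;> norm_num

lemma sub_pow_four_of_zero_or_one (ha : a = 0 ∨ a = 1) (hb : b = 0 ∨ b = 1) :
    (b - a) ^ 4 = (b - a) ^ 2 := by
  rcases ha with rfl | rfl <;> rcases hb with rfl | rfl <;> norm_num

end ZeroOne

namespace ProbabilityTheory

lemma hasSum_descFactorial_poissonMeasure (r : ℝ≥0) (j : ℕ) :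
    HasSum (fun n ↦ Real.exp (-r) * r ^ n / n ! * n.descFactorial j) ((r : ℝ) ^ j) := by
  -- the terms with `n < j` vanish; shifted by `j`, the rest are `r ^ j` times the Poisson weights
  rw [← hasSum_nat_add_iff' j, sum_eq_zero fun n hn ↦ by
    simp [Nat.descFactorial_eq_zero_iff_lt.mpr (mem_range.mp hn)], sub_zero]
  have hshift (n : ℕ) : Real.exp (-r) * r ^ (n + j) / (n + j) ! * (n + j).descFactorial j
      = (r : ℝ) ^ j * (Real.exp (-r) * r ^ n / n !) := by
    have hfac := Nat.factorial_mul_descFactorial (Nat.le_add_left j n)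
    rw [Nat.add_sub_cancel] at hfac
    rw [← hfac]
    push_cast
    field_simp
    ring
  simpa only [hshift, mul_one] using (hasSum_one_poissonMeasure r).mul_left ((r : ℝ) ^ j)

lemma integral_descFactorial_poissonMeasure (r : ℝ≥0) (j : ℕ) :
    ∫ n, (n.descFactorial j : ℝ) ∂poissonMeasure r = (r : ℝ) ^ j := by
  rw [integral_poissonMeasure]
  exact (hasSum_descFactorial_poissonMeasure r j).tsum_eq

lemma integrable_descFactorial_poissonMeasure (r : ℝ≥0) (j : ℕ) :
    Integrable (fun n : ℕ ↦ (n.descFactorial j : ℝ)) (poissonMeasure r) := by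
  rw [integrable_poissonMeasure_iff]
  simpa using (hasSum_descFactorial_poissonMeasure r j).summable

lemma integrable_pow_poissonMeasure (r : ℝ≥0) (j : ℕ) :
    Integrable (fun n : ℕ ↦ (n : ℝ) ^ j) (poissonMeasure r) := by
  rw [integrable_poissonMeasure_iff]
  refine .of_nonneg_of_le (fun n ↦ by positivity) (fun n ↦ ?_)
    ((Real.summable_pow_div_factorial (Real.exp 1 * r)).mul_left (Real.exp (-r) * j !))
  -- `n ^ j ≤ j! eⁿ`: a single term of the exponential series is below its sum
  have hpow : (n : ℝ) ^ j ≤ j ! * Real.exp 1 ^ n := by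
    have := Real.pow_div_factorial_le_exp (n : ℝ) n.cast_nonneg j
    rw [div_le_iff₀ (by positivity), ← Real.exp_one_pow] at this
    linarith
  rw [Real.norm_of_nonneg (by positivity), mul_pow]
  calc Real.exp (-r) * r ^ n / n ! * (n : ℝ) ^ j
      ≤ Real.exp (-r) * r ^ n / n ! * (j ! * Real.exp 1 ^ n) := by gcongr
    _ = _ := by ring

end ProbabilityTheory

section

variable {Ω : Type*} [MeasurableSpace Ω] {P : Measure Ω} {N : Ω → ℕ} {m : ℝ} {D : ℕ → Ω → ℝ}
  {C s₂ s₄ : ℝ}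

lemma IsPoissonRV.map_eq_poissonMeasure (hN : IsPoissonRV P N m) (hNmeas : Measurable N)
    (hm : 0 ≤ m) : P.map N = poissonMeasure m.toNNReal := by
  refine Measure.ext_of_singleton fun k ↦ ?_
  rw [Measure.map_apply hNmeas (measurableSet_singleton k), poissonMeasure_singleton,
    Real.coe_toNNReal m hm]
  exact hN k

lemma IsPoissonRV.integrable_pow (hN : IsPoissonRV P N m) (hNmeas : Measurable N)
    (hm : 0 ≤ m) (j : ℕ) : Integrable (fun ω ↦ (N ω : ℝ) ^ j) P := by
  have := integrable_pow_poissonMeasure m.toNNReal j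
  rwa [← hN.map_eq_poissonMeasure hNmeas hm,
    integrable_map_measure (by fun_prop) hNmeas.aemeasurable] at this

lemma IsPoissonRV.integrable_descFactorial (hN : IsPoissonRV P N m) (hNmeas : Measurable N)
    (hm : 0 ≤ m) (j : ℕ) : Integrable (fun ω ↦ ((N ω).descFactorial j : ℝ)) P := by
  have := integrable_descFactorial_poissonMeasure m.toNNReal j
  rwa [← hN.map_eq_poissonMeasure hNmeas hm,
    integrable_map_measure (by fun_prop) hNmeas.aemeasurable] at this

lemma IsPoissonRV.integral_descFactorial (hN : IsPoissonRV P N m) (hNmeas : Measurable N)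
    (hm : 0 ≤ m) (j : ℕ) : ∫ ω, ((N ω).descFactorial j : ℝ) ∂P = m ^ j := by
  have := integral_descFactorial_poissonMeasure m.toNNReal j
  rwa [← hN.map_eq_poissonMeasure hNmeas hm, integral_map hNmeas.aemeasurable (by fun_prop),
    Real.coe_toNNReal m hm] at this

lemma ProbabilityTheory.iIndepFun.indepFun_partialSum (hD : iIndepFun D P)
    (hmeas : ∀ u, Measurable (D u)) (k : ℕ) :
    IndepFun (fun ω ↦ ∑ u ∈ range k, D u ω) (D k) P := by
  simpa only [← Finset.sum_apply] using hD.indepFun_sum_range_succ hmeas k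

lemma ProbabilityTheory.IndepFun.comp_seq {γ β δ : Type*} [MeasurableSpace γ]
    [MeasurableSpace β] [MeasurableSpace δ] {X : Ω → γ} {ξ : ℕ → Ω → β}
    (h : IndepFun X (fun ω u ↦ ξ u ω) P) {f : β → δ} (hf : Measurable f) :
    IndepFun X (fun ω u ↦ f (ξ u ω)) P :=
  h.comp measurable_id (measurable_pi_lambda (fun (x : ℕ → β) u ↦ f (x u)) fun u ↦
    hf.comp (measurable_pi_apply u))

section FiniteMeasure

variable [IsFiniteMeasure P]

lemma MeasureTheory.MemLp.integrable_pow_of_le {X : Ω → ℝ} {n i : ℕ} (hX : MemLp X n P)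
    (hi : i ≤ n) : Integrable (fun ω ↦ X ω ^ i) P :=
  (hX.mono_exponent (by exact_mod_cast hi)).integrable_norm_pow'.congr'
    (hX.aestronglyMeasurable.pow i) (.of_forall fun ω ↦ by simp)

lemma ProbabilityTheory.IndepFun.integral_add_pow {X Y : Ω → ℝ} {n : ℕ} (hXY : IndepFun X Y P)
    (hX : MemLp X n P) (hY : MemLp Y n P) :
    ∫ ω, (X ω + Y ω) ^ n ∂P
      = ∑ i ∈ range (n + 1), (∫ ω, X ω ^ i ∂P) * (∫ ω, Y ω ^ (n - i) ∂P) * n.choose i := by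
  simp_rw [add_pow]
  rw [integral_finsetSum _ fun i hi ↦ ?_]
  · refine sum_congr rfl fun i _ ↦ ?_
    rw [integral_mul_const, hXY.integral_fun_comp_mul_comp (f := (· ^ i)) (g := (· ^ (n - i)))
      hX.aemeasurable hY.aemeasurable (by fun_prop) (by fun_prop)]
  · exact ((hXY.comp (measurable_id.pow_const i) (measurable_id.pow_const (n - i))).integrable_mul
      (hX.integrable_pow_of_le (Nat.lt_succ_iff.mp (mem_range.mp hi)))
      (hY.integrable_pow_of_le (Nat.sub_le n i))).mul_const _

lemma ProbabilityTheory.IndepFun.integral_comp_eq_integral_integral {γ β : Type*}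
    [MeasurableSpace γ] [MeasurableSpace β] {X : Ω → γ} {Y : Ω → β} (hXY : IndepFun X Y P)
    (hX : AEMeasurable X P) (hY : AEMeasurable Y P) {G : γ → β → ℝ}
    (hG : Measurable (Function.uncurry G)) (hint : Integrable (fun ω ↦ G (X ω) (Y ω)) P) :
    ∫ ω, G (X ω) (Y ω) ∂P = ∫ ω, ∫ ω', G (X ω) (Y ω') ∂P ∂P := by
  have hlaw := (indepFun_iff_map_prod_eq_prod_map_map hX hY).mp hXY
  have hXY' : AEMeasurable (fun ω ↦ (X ω, Y ω)) P := hX.prodMk hY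
  have hint' : Integrable (Function.uncurry G) ((P.map X).prod (P.map Y)) := by
    rwa [← hlaw, integrable_map_measure hG.aestronglyMeasurable hXY']
  have hinner (k : γ) : ∫ x, G k x ∂P.map Y = ∫ ω', G k (Y ω') ∂P :=
    integral_map hY (hG.comp measurable_prodMk_left).aestronglyMeasurable
  calc ∫ ω, G (X ω) (Y ω) ∂P
      = ∫ z, Function.uncurry G z ∂(P.map X).prod (P.map Y) := by
        rw [← hlaw, integral_map hXY' hG.aestronglyMeasurable]
        rfl
    _ = ∫ k, ∫ x, G k x ∂P.map Y ∂P.map X := integral_prod _ hint'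
    _ = ∫ ω, ∫ ω', G (X ω) (Y ω') ∂P ∂P := by
        rw [integral_map hX
          (hG.stronglyMeasurable.integral_prod_right (ν := P.map Y)).aestronglyMeasurable]
        simp_rw [hinner]

section ZeroOnePair

variable {Z : Ω → ℝ × ℝ}

lemma integrable_of_zero_or_one {f : Ω → ℝ} (hf : AEStronglyMeasurable f P)
    (h01 : ∀ ω, f ω = 0 ∨ f ω = 1) : Integrable f P :=
  .of_bound hf 1 (.of_forall fun ω ↦ by rcases h01 ω with h | h <;> simp [h])

lemma integral_snd_sub_fst_of_zero_or_one (hZ : Measurable Z)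
    (h01 : ∀ ω, ((Z ω).1 = 0 ∨ (Z ω).1 = 1) ∧ ((Z ω).2 = 0 ∨ (Z ω).2 = 1)) :
    ∫ ω, ((Z ω).2 - (Z ω).1) ∂P = ∫ ω, (Z ω).2 ∂P - ∫ ω, (Z ω).1 ∂P :=
  integral_sub (integrable_of_zero_or_one hZ.snd.aestronglyMeasurable fun ω ↦ (h01 ω).2)
    (integrable_of_zero_or_one hZ.fst.aestronglyMeasurable fun ω ↦ (h01 ω).1)

lemma integral_snd_sub_fst_sq_of_zero_or_one (hZ : Measurable Z)
    (h01 : ∀ ω, ((Z ω).1 = 0 ∨ (Z ω).1 = 1) ∧ ((Z ω).2 = 0 ∨ (Z ω).2 = 1)) :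
    ∫ ω, ((Z ω).2 - (Z ω).1) ^ 2 ∂P
      = ∫ ω, (Z ω).1 ∂P + ∫ ω, (Z ω).2 ∂P - 2 * ∫ ω, (Z ω).1 * (Z ω).2 ∂P := by
  have h₁ : Integrable (fun ω ↦ (Z ω).1) P :=
    integrable_of_zero_or_one hZ.fst.aestronglyMeasurable fun ω ↦ (h01 ω).1
  have h₂ : Integrable (fun ω ↦ (Z ω).2) P :=
    integrable_of_zero_or_one hZ.snd.aestronglyMeasurable fun ω ↦ (h01 ω).2
  have h₁₂ : Integrable (fun ω ↦ (Z ω).1 * (Z ω).2) P :=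
    integrable_of_zero_or_one (hZ.fst.mul hZ.snd).aestronglyMeasurable fun ω ↦ by
      rcases (h01 ω).1 with h | h <;> simp [h, (h01 ω).2]
  have h₁_add_h₂ : Integrable (fun ω ↦ (Z ω).1 + (Z ω).2) P := h₁.add h₂
  simp_rw [sub_sq_of_zero_or_one (h01 _).1 (h01 _).2]
  rw [integral_sub h₁_add_h₂ (h₁₂.const_mul 2), integral_add h₁ h₂, integral_const_mul]

end ZeroOnePair

end FiniteMeasure

lemma measurable_sum_range_comp (hNmeas : Measurable N) (hmeas : ∀ u, Measurable (D u)) :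
    Measurable fun ω ↦ ∑ u ∈ range (N ω), D u ω := by
  have h : Measurable fun z : ℕ × Ω ↦ ∑ u ∈ range z.1, D u z.2 :=
    measurable_from_prod_countable_right fun k ↦ measurable_sum (range k) fun u _ ↦ hmeas u
  exact h.comp (hNmeas.prodMk measurable_id)

lemma IsPoissonRV.integrable_sum_range_pow (hN : IsPoissonRV P N m) (hNmeas : Measurable N)
    (hm : 0 ≤ m) (hmeas : ∀ u, Measurable (D u)) (hbdd : ∀ u ω, |D u ω| ≤ C) (j : ℕ) :
    Integrable (fun ω ↦ (∑ u ∈ range (N ω), D u ω) ^ j) P := by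
  refine ((hN.integrable_pow hNmeas hm j).const_mul (C ^ j)).mono'
    ((measurable_sum_range_comp hNmeas hmeas).pow_const j).aestronglyMeasurable
    (.of_forall fun ω ↦ ?_)
  have hsum : |∑ u ∈ range (N ω), D u ω| ≤ C * N ω := by
    simpa [mul_comm] using
      (abs_sum_le_sum_abs _ (range (N ω))).trans (sum_le_sum fun u _ ↦ hbdd u ω)
  rw [Real.norm_eq_abs, abs_pow, ← mul_pow]
  exact pow_le_pow_left₀ (abs_nonneg _) hsum j

variable [IsProbabilityMeasure P]

lemma ProbabilityTheory.IndepFun.integral_add_sq_of_integral_eq_zero {X Y : Ω → ℝ}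
    (hXY : IndepFun X Y P) (hX : MemLp X 2 P) (hY : MemLp Y 2 P) (hY₁ : ∫ ω, Y ω ∂P = 0) :
    ∫ ω, (X ω + Y ω) ^ 2 ∂P = ∫ ω, X ω ^ 2 ∂P + ∫ ω, Y ω ^ 2 ∂P := by
  rw [hXY.integral_add_pow hX hY]
  simp only [sum_range_succ, Finset.range_one, sum_singleton, Nat.choose_zero_right,
    Nat.choose_succ_self_right, Nat.choose_self, Nat.reduceAdd, Nat.add_one_sub_one, tsub_zero,
    tsub_self, pow_zero, pow_one, integral_const, probReal_univ, smul_eq_mul, hY₁, Nat.cast_one,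
    Nat.cast_ofNat, one_mul, mul_one, mul_zero, zero_mul, add_zero]
  ring

lemma ProbabilityTheory.IndepFun.integral_add_pow_four_of_integral_eq_zero {X Y : Ω → ℝ}
    (hXY : IndepFun X Y P) (hX : MemLp X 4 P) (hY : MemLp Y 4 P) (hX₁ : ∫ ω, X ω ∂P = 0)
    (hY₁ : ∫ ω, Y ω ∂P = 0) :
    ∫ ω, (X ω + Y ω) ^ 4 ∂P
      = ∫ ω, X ω ^ 4 ∂P + 6 * (∫ ω, X ω ^ 2 ∂P) * (∫ ω, Y ω ^ 2 ∂P) + ∫ ω, Y ω ^ 4 ∂P := by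
  rw [hXY.integral_add_pow hX hY]
  simp only [sum_range_succ, Finset.range_one, sum_singleton, Nat.choose, Nat.reduceAdd,
    Nat.reduceSub, Nat.add_one_sub_one, tsub_zero, tsub_self, pow_zero, pow_one, integral_const,
    probReal_univ, smul_eq_mul, hX₁, hY₁, Nat.cast_one, Nat.cast_ofNat, one_mul, mul_one,
    mul_zero, zero_mul, add_zero]
  ring

lemma ProbabilityTheory.iIndepFun.integral_sum_range_pow_two (hD : iIndepFun D P)
    (hmeas : ∀ u, Measurable (D u)) (hL2 : ∀ u, MemLp (D u) 2 P)
    (h₁ : ∀ u, ∫ ω, D u ω ∂P = 0) (h₂ : ∀ u, ∫ ω, D u ω ^ 2 ∂P = s₂) (k : ℕ) :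
    ∫ ω, (∑ u ∈ range k, D u ω) ^ 2 ∂P = k * s₂ := by
  induction k with
  | zero => simp
  | succ k ih =>
    simp_rw [sum_range_succ]
    rw [(hD.indepFun_partialSum hmeas k).integral_add_sq_of_integral_eq_zero
      (memLp_finsetSum _ fun u _ ↦ hL2 u) (hL2 k) (h₁ k), ih, h₂]
    push_cast
    ring

lemma ProbabilityTheory.iIndepFun.integral_sum_range_pow_four (hD : iIndepFun D P)
    (hmeas : ∀ u, Measurable (D u)) (hL4 : ∀ u, MemLp (D u) 4 P)
    (h₁ : ∀ u, ∫ ω, D u ω ∂P = 0) (h₂ : ∀ u, ∫ ω, D u ω ^ 2 ∂P = s₂)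
    (h₄ : ∀ u, ∫ ω, D u ω ^ 4 ∂P = s₄) (k : ℕ) :
    ∫ ω, (∑ u ∈ range k, D u ω) ^ 4 ∂P = k * s₄ + 3 * k * (k - 1) * s₂ ^ 2 := by
  induction k with
  | zero => simp
  | succ k ih =>
    have hL2 (u : ℕ) : MemLp (D u) 2 P := (hL4 u).mono_exponent (by norm_num)
    have hS₁ : ∫ ω, ∑ u ∈ range k, D u ω ∂P = 0 := by
      rw [integral_finsetSum _ fun u _ ↦ (hL4 u).integrable (by norm_num)]
      exact sum_eq_zero fun u _ ↦ h₁ u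
    simp_rw [sum_range_succ]
    rw [(hD.indepFun_partialSum hmeas k).integral_add_pow_four_of_integral_eq_zero
      (memLp_finsetSum _ fun u _ ↦ hL4 u) (hL4 k) hS₁ (h₁ k),
      ih, hD.integral_sum_range_pow_two hmeas hL2 h₁ h₂, h₂, h₄]
    push_cast
    ring

theorem IsPoissonRV.integral_sum_range_pow_four (hN : IsPoissonRV P N m)
    (hNmeas : Measurable N) (hm : 0 ≤ m) (hD : iIndepFun D P)
    (hmeas : ∀ u, Measurable (D u)) (hND : IndepFun N (fun ω u ↦ D u ω) P)
    (hbdd : ∀ u ω, |D u ω| ≤ C) (h₁ : ∀ u, ∫ ω, D u ω ∂P = 0)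
    (h₂ : ∀ u, ∫ ω, D u ω ^ 2 ∂P = s₂) (h₄ : ∀ u, ∫ ω, D u ω ^ 4 ∂P = s₄) :
    ∫ ω, (∑ u ∈ range (N ω), D u ω) ^ 4 ∂P = m * s₄ + 3 * m ^ 2 * s₂ ^ 2 := by
  have hG : Measurable (Function.uncurry fun k (x : ℕ → ℝ) ↦ (∑ u ∈ range k, x u) ^ 4) :=
    measurable_from_prod_countable_right fun k ↦ by
      simp only [Function.uncurry_apply_pair]
      exact (measurable_sum _ fun u _ ↦ measurable_pi_apply u).pow_const 4
  have hL4 (u : ℕ) : MemLp (D u) 4 P :=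
    .of_bound (hmeas u).aestronglyMeasurable C
      (.of_forall fun ω ↦ (Real.norm_eq_abs _).trans_le (hbdd u ω))
  have hI (j : ℕ) := hN.integrable_descFactorial hNmeas hm j
  rw [hND.integral_comp_eq_integral_integral hNmeas.aemeasurable
    (measurable_pi_lambda _ hmeas).aemeasurable hG
    (hN.integrable_sum_range_pow hNmeas hm hmeas hbdd 4)]
  simp_rw [hD.integral_sum_range_pow_four hmeas hL4 h₁ h₂ h₄]
  calc ∫ ω, (N ω : ℝ) * s₄ + 3 * N ω * (N ω - 1) * s₂ ^ 2 ∂P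
      = ∫ ω, s₄ * (N ω).descFactorial 1 + 3 * s₂ ^ 2 * (N ω).descFactorial 2 ∂P := by
        simp only [Nat.descFactorial_one, Nat.cast_descFactorial_two]
        congr! 2
        ring
    _ = m * s₄ + 3 * m ^ 2 * s₂ ^ 2 := by
      rw [integral_add ((hI 1).const_mul _) ((hI 2).const_mul _), integral_const_mul,
        integral_const_mul, hN.integral_descFactorial hNmeas hm,
        hN.integral_descFactorial hNmeas hm]
      ring

end

theorem fourth_moment_poisson_random_sum_of_onoff_differences_general
    {Ω : Type*} [MeasurableSpace Ω] (P : Measure Ω) [IsProbabilityMeasure P]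
    (p lam : ℝ) (hp : 0 < p) (hlam : 0 < lam)
    (N : Ω → ℕ) (hNmeas : Measurable N) (hN : IsPoissonRV P N (lam * p))
    (ξ : ℕ → Ω → ℝ × ℝ) (hξmeas : ∀ u, Measurable (ξ u))
    -- `{0,1}`-valued coordinates (the pair `(W_u(s), W_u(t))`)
    (h01 : ∀ u ω, ((ξ u ω).1 = 0 ∨ (ξ u ω).1 = 1) ∧ ((ξ u ω).2 = 0 ∨ (ξ u ω).2 = 1))
    -- mutually independent pairs
    (hindep : iIndepFun ξ P)
    -- the whole sequence is independent of `N`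
    (hNindep : IndepFun N (fun ω (u : ℕ) => ξ u ω) P)
    (μW : ℝ) (σW2 : ℝ) (hσW2 : σW2 = μW * (1 - μW))
    -- stationarity: both marginal means equal `μ_W`
    (hmean1 : ∀ u, ∫ ω, (ξ u ω).1 ∂P = μW) (hmean2 : ∀ u, ∫ ω, (ξ u ω).2 ∂P = μW)
    -- the autocovariance value `r(t−s)`
    (rts : ℝ) (hrts : ∀ u, ∫ ω, (ξ u ω).1 * (ξ u ω).2 ∂P - μW ^ 2 = rts) :
    ∫ ω, (lam ^ (-(1:ℝ)/2)
        * ∑ u ∈ Finset.range (N ω), (((ξ u ω).2 - μW) - ((ξ u ω).1 - μW))) ^ 4 ∂P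
      = 2 * p / lam * (σW2 - rts) + 12 * p ^ 2 * (σW2 - rts) ^ 2 := by
  have hv (u : ℕ) : ∫ ω, ((ξ u ω).2 - (ξ u ω).1) ^ 2 ∂P = 2 * (σW2 - rts) := by
    rw [integral_snd_sub_fst_sq_of_zero_or_one (hξmeas u) (h01 u), hmean1, hmean2, ← hrts u,
      hσW2]
    ring
  have hS := hN.integral_sum_range_pow_four (D := fun u ω ↦ (ξ u ω).2 - (ξ u ω).1) hNmeas
    (by positivity) (hindep.comp _ fun _ ↦ measurable_snd.sub measurable_fst)
    (fun u ↦ (hξmeas u).snd.sub (hξmeas u).fst)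
    (hNindep.comp_seq (measurable_snd.sub measurable_fst))
    (fun u ω ↦ abs_sub_le_one_of_zero_or_one (h01 u ω).1 (h01 u ω).2)
    (fun u ↦ by rw [integral_snd_sub_fst_of_zero_or_one (hξmeas u) (h01 u), hmean1, hmean2,
      sub_self])
    hv (fun u ↦ by simpa only [sub_pow_four_of_zero_or_one (h01 u _).1 (h01 u _).2] using hv u)
  have hscale : (lam ^ (-(1:ℝ)/2)) ^ 4 = (lam ^ 2)⁻¹ := by
    rw [← Real.rpow_natCast, ← Real.rpow_mul hlam.le]
    norm_num
  simp_rw [sub_sub_sub_cancel_right, mul_pow]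
  rw [integral_const_mul, hS, hscale]
  field_simp
  ring

/-- let `N` be Poisson with mean `λp` and let `(A_u, B_u)` be i.i.d.
pairs, independent of `N`, distributed as `(W(s) − μ_W, W(t) − μ_W)` for a stationary
`{0,1}`-valued process `W` with mean `μ_W`, variance `σ_W² = μ_W(1 − μ_W)` and
autocovariance `r` (here `ξ u = (W_u(s), W_u(t))` takes values in `{0,1}²`, has marginal
means `μ_W` and `E[W_u(s) W_u(t)] − μ_W² = r(t−s) =: rts`). Then
`E[(λ^{−1/2} Σ_{u=1}^{N} (B_u − A_u))⁴]
  = (2p/λ)(σ_W² − r(t−s)) + 12 p² (σ_W² − r(t−s))²`. -/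
theorem fourth_moment_poisson_random_sum_of_onoff_differences
    {Ω : Type*} [MeasurableSpace Ω] (P : Measure Ω) [IsProbabilityMeasure P]
    (p lam : ℝ) (hp : 0 < p) (hlam : 0 < lam)
    (N : Ω → ℕ) (hNmeas : Measurable N) (hN : IsPoissonRV P N (lam * p))
    (ξ : ℕ → Ω → ℝ × ℝ) (hξmeas : ∀ u, Measurable (ξ u))
    -- `{0,1}`-valued coordinates (the pair `(W_u(s), W_u(t))`)
    (h01 : ∀ u ω, ((ξ u ω).1 = 0 ∨ (ξ u ω).1 = 1) ∧ ((ξ u ω).2 = 0 ∨ (ξ u ω).2 = 1))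
    -- identically distributed pairs
    (hident : ∀ u, Measure.map (ξ u) P = Measure.map (ξ 0) P)
    -- mutually independent pairs
    (hindep : iIndepFun ξ P)
    -- the whole sequence is independent of `N`
    (hNindep : IndepFun N (fun ω (u : ℕ) => ξ u ω) P)
    (μW : ℝ) (σW2 : ℝ) (hσW2 : σW2 = μW * (1 - μW))
    -- stationarity: both marginal means equal `μ_W`
    (hmean1 : ∀ u, ∫ ω, (ξ u ω).1 ∂P = μW) (hmean2 : ∀ u, ∫ ω, (ξ u ω).2 ∂P = μW)
    -- the autocovariance value `r(t−s)`
    (rts : ℝ) (hrts : ∀ u, ∫ ω, (ξ u ω).1 * (ξ u ω).2 ∂P - μW ^ 2 = rts) :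
    ∫ ω, (lam ^ (-(1:ℝ)/2)
        * ∑ u ∈ Finset.range (N ω), (((ξ u ω).2 - μW) - ((ξ u ω).1 - μW))) ^ 4 ∂P
      = 2 * p / lam * (σW2 - rts) + 12 * p ^ 2 * (σW2 - rts) ^ 2 :=
  fourth_moment_poisson_random_sum_of_onoff_differences_general P p lam hp hlam N hNmeas hN ξ hξmeas
    h01 hindep hNindep μW σW2 hσW2 hmean1 hmean2 rts hrts
end
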